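/- arXiv:math/0408192 — 9 statements merged into one kernel-verified Lean document; each statement's English description precedes it below -/
import Mathlib

section
/- Let H be a real Hilbert space and let F : H → H be twice Fréchet differentiable. Suppose there exist a point u₀ ∈ H and functions M₁, M₂, m : (0,∞) → (0,∞) such that for every R > 0 and every u in the closed ball B(u₀,R) = {u : ‖u − u₀‖ ≤ R} one has ‖F′(u)‖ ≤ M₁(R), ‖F″(u)‖ ≤ M₂(R), and F′(u) is a boundedly invertible continuous linear operator with ‖[F′(u)]⁻¹‖ ≤ m(R). If sup_{R>0} R/m(R) = ∞, then F is surjective: for every f ∈ H there exists u ∈ H with F(u) = f. -/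
open Set Metric
open scoped NNReal

/-!
Following the dynamical systems method, fix `f` and put `w = f - F u₀`. The flow of the
autonomous vector field `u ↦ F'(u)⁻¹ w` satisfies `d/dt F(u(t)) = w`, so starting from `u(0) = u₀`
it reaches `F(u(1)) = f`, provided it exists up to time `1`. On `B(u₀, R)` the field is bounded by
`m(R) ‖w‖` and Lipschitz (by the bound on `F''` and the resolvent identity), so Picard–Lindelöf
gives the flow on `[0, 1]` as soon as `m(R) ‖w‖ ≤ R`, which the growth condition on `R / m(R)`
provides.
-/

section InverseField

variable {E G : Type*} [NormedAddCommGroup E] [NormedSpace ℝ E]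
  [NormedAddCommGroup G] [NormedSpace ℝ G]

theorem ContinuousLinearMap.apply_sub_apply_eq_of_inverse {A B : E →L[ℝ] G} {A' B' : G →L[ℝ] E}
    (hA : A'.comp A = .id ℝ E) (hB : B.comp B' = .id ℝ G) (w : G) :
    A' w - B' w = A' ((B - A) (B' w)) := by
  have hB' : B (B' w) = w := congr($hB w)
  have hA' : A' (A (B' w)) = B' w := congr($hA (B' w))
  rw [sub_apply, map_sub, hB', hA']

theorem lipschitzOnWith_inverse_apply {F' : E → E →L[ℝ] G} {Finv : E → G →L[ℝ] E} {s : Set E}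
    {K c : ℝ≥0} (hF' : LipschitzOnWith K F' s) (hc : ∀ u ∈ s, ‖Finv u‖ ≤ c)
    (hleft : ∀ u ∈ s, (Finv u).comp (F' u) = .id ℝ E)
    (hright : ∀ u ∈ s, (F' u).comp (Finv u) = .id ℝ G) (w : G) :
    LipschitzOnWith (c * c * K * ‖w‖₊) (fun u => Finv u w) s := by
  refine LipschitzOnWith.of_dist_le_mul fun u hu u' hu' => ?_
  rw [dist_eq_norm, dist_eq_norm,
    ContinuousLinearMap.apply_sub_apply_eq_of_inverse (hleft u hu) (hright u' hu')]
  have hF'uu' : ‖F' u' - F' u‖ ≤ K * ‖u - u'‖ := by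
    rw [← dist_eq_norm, ← dist_eq_norm, dist_comm u]
    exact hF'.dist_le_mul u' hu' u hu
  calc ‖Finv u ((F' u' - F' u) (Finv u' w))‖
      ≤ ‖Finv u‖ * (‖F' u' - F' u‖ * (‖Finv u'‖ * ‖w‖)) := by
        refine (Finv u).le_opNorm_of_le ((F' u' - F' u).le_opNorm_of_le ?_)
        exact (Finv u').le_opNorm w
    _ ≤ c * ((K * ‖u - u'‖) * (c * ‖w‖)) := by
        gcongr
        exacts [hc u hu, hc u' hu']
    _ = (c * c * K * ‖w‖₊ : ℝ≥0) * ‖u - u'‖ := by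
        push_cast
        ring

end InverseField

section Flow

variable {E : Type*} [NormedAddCommGroup E] [NormedSpace ℝ E]

theorem exists_hasDerivWithinAt_Icc_of_lipschitzOnWith_closedBall [CompleteSpace E]
    {v : E → E} {x₀ : E} {r C T : ℝ} {K : ℝ≥0} (hv : LipschitzOnWith K v (closedBall x₀ r))
    (hC : ∀ x ∈ closedBall x₀ r, ‖v x‖ ≤ C) (hr : 0 ≤ r) (hT : 0 ≤ T) (hCT : C * T ≤ r) :
    ∃ α : ℝ → E, α 0 = x₀ ∧ ∀ t ∈ Icc 0 T, HasDerivWithinAt α (v (α t)) (Icc 0 T) t := by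
  have hC₀ : 0 ≤ C := (norm_nonneg _).trans (hC x₀ (mem_closedBall_self hr))
  have hpl : IsPicardLindelof (fun _ => v) (⟨0, le_rfl, hT⟩ : Icc 0 T) x₀
      r.toNNReal 0 C.toNNReal K := by
    refine ⟨fun _ _ => ?_, fun _ _ => continuousOn_const, fun _ _ x hx => ?_, ?_⟩
    · rwa [Real.coe_toNNReal _ hr]
    · rw [Real.coe_toNNReal _ hC₀]
      exact hC x (by rwa [Real.coe_toNNReal _ hr] at hx)
    · simpa [Real.coe_toNNReal _ hr, Real.coe_toNNReal _ hC₀, hT] using hCT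
  exact hpl.exists_eq_forall_mem_Icc_hasDerivWithinAt₀

theorem sub_eq_smul_of_forall_hasDerivWithinAt_Icc {g : ℝ → E} {w : E} {a b : ℝ} (hab : a ≤ b)
    (hg : ∀ t ∈ Icc a b, HasDerivWithinAt g w (Icc a b) t) : g b - g a = (b - a) • w := by
  have hzero : ∀ t ∈ Icc a b, HasDerivWithinAt (fun t => g t - t • w) 0 (Icc a b) t := by
    intro t ht
    simpa using (hg t ht).fun_sub ((hasDerivWithinAt_id t (Icc a b)).smul_const w)
  have := (convex_Icc a b).norm_image_sub_le_of_norm_hasDerivWithin_le hzero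
    (fun _ _ => norm_zero.le) (left_mem_Icc.2 hab) (right_mem_Icc.2 hab)
  rwa [zero_mul, norm_le_zero_iff, sub_sub_sub_comm, sub_eq_zero, ← sub_smul] at this

end Flow

theorem dsm_surjectivity_general
    {H : Type*} [NormedAddCommGroup H] [InnerProductSpace ℝ H] [CompleteSpace H]
    (F : H → H) (F' : H → H →L[ℝ] H) (F'' : H → H →L[ℝ] H →L[ℝ] H)
    (Finv : H → H →L[ℝ] H)
    (hF' : ∀ u, HasFDerivAt F (F' u) u)
    (hF'' : ∀ u, HasFDerivAt F' (F'' u) u)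
    (u₀ : H) (M₂ m : ℝ → ℝ)
    (hM₂ : ∀ R > (0:ℝ), ∀ u ∈ closedBall u₀ R, ‖F'' u‖ ≤ M₂ R)
    (hinv_left : ∀ u, (Finv u).comp (F' u) = ContinuousLinearMap.id ℝ H)
    (hinv_right : ∀ u, (F' u).comp (Finv u) = ContinuousLinearMap.id ℝ H)
    (hm : ∀ R > (0:ℝ), ∀ u ∈ closedBall u₀ R, ‖Finv u‖ ≤ m R)
    (hsup : ∀ C : ℝ, ∃ R > (0:ℝ), C < R / m R) :
    Function.Surjective F := by
  intro f
  set w := f - F u₀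
  obtain ⟨R, hR, hRw⟩ := hsup ‖w‖
  have hmR : 0 < m R := (div_pos_iff_of_pos_left hR).1 ((norm_nonneg w).trans_lt hRw)
  have hF'lip : LipschitzOnWith (M₂ R).toNNReal F' (closedBall u₀ R) :=
    (convex_closedBall u₀ R).lipschitzOnWith_of_nnnorm_hasFDerivWithin_le
      (fun u _ => (hF'' u).hasFDerivWithinAt)
      (fun u hu => by rw [← norm_toNNReal]; exact Real.toNNReal_le_toNNReal (hM₂ R hR u hu))
  have hv := lipschitzOnWith_inverse_apply hF'lip
    (fun u hu => (hm R hR u hu).trans (Real.le_coe_toNNReal _))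
    (fun u _ => hinv_left u) (fun u _ => hinv_right u) w
  obtain ⟨α, hα₀, hα⟩ := exists_hasDerivWithinAt_Icc_of_lipschitzOnWith_closedBall hv
    (fun u hu => (Finv u).le_of_opNorm_le (hm R hR u hu) w) hR.le zero_le_one
    (by rw [mul_one, mul_comm]; exact ((lt_div_iff₀ hmR).1 hRw).le)
  have hFα : ∀ t ∈ Icc (0:ℝ) 1, HasDerivWithinAt (F ∘ α) w (Icc 0 1) t := fun t ht => by
    simpa [show F' (α t) (Finv (α t) w) = w from congr($(hinv_right (α t)) w)]
      using (hF' (α t)).comp_hasDerivWithinAt t (hα t ht)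
  exact ⟨α 1, by simpa [hα₀, w] using sub_eq_smul_of_forall_hasDerivWithinAt_Icc zero_le_one hFα⟩

/-- If `F : H → H` is twice Fréchet differentiable on a real Hilbert
space, with `‖F'(u)‖ ≤ M₁(R)`, `‖F''(u)‖ ≤ M₂(R)` and `F'(u)` boundedly invertible
with `‖[F'(u)]⁻¹‖ ≤ m(R)` on each closed ball `B(u₀,R)`, and
`sup_{R>0} R / m(R) = ∞`, then `F` is surjective. -/
theorem dsm_surjectivity
    {H : Type*} [NormedAddCommGroup H] [InnerProductSpace ℝ H] [CompleteSpace H]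
    (F : H → H) (F' : H → H →L[ℝ] H) (F'' : H → H →L[ℝ] H →L[ℝ] H)
    (Finv : H → H →L[ℝ] H)
    (hF' : ∀ u, HasFDerivAt F (F' u) u)
    (hF'' : ∀ u, HasFDerivAt F' (F'' u) u)
    (u₀ : H) (M₁ M₂ m : ℝ → ℝ)
    (hM₁pos : ∀ R > (0:ℝ), 0 < M₁ R)
    (hM₂pos : ∀ R > (0:ℝ), 0 < M₂ R)
    (hmpos : ∀ R > (0:ℝ), 0 < m R)
    (hM₁ : ∀ R > (0:ℝ), ∀ u ∈ closedBall u₀ R, ‖F' u‖ ≤ M₁ R)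
    (hM₂ : ∀ R > (0:ℝ), ∀ u ∈ closedBall u₀ R, ‖F'' u‖ ≤ M₂ R)
    (hinv_left : ∀ u, (Finv u).comp (F' u) = ContinuousLinearMap.id ℝ H)
    (hinv_right : ∀ u, (F' u).comp (Finv u) = ContinuousLinearMap.id ℝ H)
    (hm : ∀ R > (0:ℝ), ∀ u ∈ closedBall u₀ R, ‖Finv u‖ ≤ m R)
    (hsup : ∀ C : ℝ, ∃ R > (0:ℝ), C < R / m R) :
    Function.Surjective F :=
  dsm_surjectivity_general F F' F'' Finv hF' hF'' u₀ M₂ m hM₂ hinv_left hinv_right hm hsup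
end

section
/- Let H be a real Hilbert space and let F : H → H be twice Fréchet differentiable. Suppose that for every R > 0 there exist constants M₁(R), M₂(R) such that ‖F′(u)‖ ≤ M₁(R) and ‖F″(u)‖ ≤ M₂(R) for all u with ‖u‖ ≤ R, and suppose there exist constants a ≥ 0 and b > 0 such that for every u ∈ H the derivative F′(u) is boundedly invertible with ‖[F′(u)]⁻¹‖ ≤ a‖u‖ + b. Then F is a homeomorphism of H onto H: F is bijective and both F and F⁻¹ are continuous. -/
/-!
For `c : G`, a path `u` with `u 0 = 0` and `F (u s) = F 0 + s • c` solves `u' = F'(u)⁻¹ c`, so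
Grönwall's inequality and `‖F'(u)⁻¹‖ ≤ a‖u‖ + b` bound all such lifts on `[0, 1]` a priori. As
`F'` is Lipschitz on bounded sets, `F` has local inverses whose targets contain balls of a common
radius around the images of a bounded set, so a lift can be continued in steps of fixed length
up to time `1`. The endpoint of the lift for `c = y - F 0` is a right inverse of `F`; Grönwall's
estimate for the distance of two lifts makes it continuous, and since `F` is a local
homeomorphism on the connected space `E`, it is also a left inverse.
-/

open Set Metric
open Filter Topology
open scoped NNReal

theorem ContinuousLinearEquiv.norm_symm_sub_symm_le {𝕜 E G : Type*} [NontriviallyNormedField 𝕜]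
    [NormedAddCommGroup E] [NormedSpace 𝕜 E] [NormedAddCommGroup G] [NormedSpace 𝕜 G]
    (e₁ e₂ : E ≃L[𝕜] G) :
    ‖(e₁.symm : G →L[𝕜] E) - e₂.symm‖ ≤
      ‖(e₁.symm : G →L[𝕜] E)‖ * ‖(e₂ : E →L[𝕜] G) - (e₁ : E →L[𝕜] G)‖ *
        ‖(e₂.symm : G →L[𝕜] E)‖ := by
  have : (e₁.symm : G →L[𝕜] E) - e₂.symm =
      ((e₁.symm : G →L[𝕜] E) ∘L ((e₂ : E →L[𝕜] G) - (e₁ : E →L[𝕜] G))) ∘L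
        (e₂.symm : G →L[𝕜] E) := by
    ext x
    simp
  rw [this]
  exact (ContinuousLinearMap.opNorm_comp_le _ _).trans
    (mul_le_mul_of_nonneg_right (ContinuousLinearMap.opNorm_comp_le _ _) (norm_nonneg _))

theorem LipschitzOnWith.continuousLinearEquiv_symm {𝕜 X E G : Type*} [NontriviallyNormedField 𝕜]
    [PseudoMetricSpace X] [NormedAddCommGroup E] [NormedSpace 𝕜 E] [NormedAddCommGroup G]
    [NormedSpace 𝕜 G] {e : X → E ≃L[𝕜] G} {s : Set X} {K : ℝ≥0} {q : ℝ}
    (he : LipschitzOnWith K (fun x => (e x : E →L[𝕜] G)) s)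
    (hq : ∀ x ∈ s, ‖((e x).symm : G →L[𝕜] E)‖ ≤ q) :
    LipschitzOnWith (q * K * q).toNNReal (fun x => ((e x).symm : G →L[𝕜] E)) s := by
  refine LipschitzOnWith.of_dist_le' fun x hx y hy => ?_
  have hq0 : 0 ≤ q := (norm_nonneg _).trans (hq x hx)
  rw [dist_eq_norm]
  calc _ ≤ _ := (e x).norm_symm_sub_symm_le (e y)
    _ ≤ q * (K * dist x y) * q := by
      gcongr
      · exact hq x hx
      · rw [← dist_eq_norm']
        exact he.dist_le_mul x hx y hy
      · exact hq y hy
    _ = q * K * q * dist x y := by ring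

theorem exists_lipschitzOnWith_closedBall {E G : Type*} [NormedAddCommGroup E] [NormedSpace ℝ E]
    [NormedAddCommGroup G] [NormedSpace ℝ G] {f : E → G} {f' : E → E →L[ℝ] G}
    (hf : ∀ x, HasFDerivAt f (f' x) x) (hf' : ∀ R > 0, ∃ M, ∀ x, ‖x‖ ≤ R → ‖f' x‖ ≤ M) (R : ℝ) :
    ∃ K, LipschitzOnWith K f (closedBall 0 R) := by
  obtain ⟨M, hM⟩ := hf' (max R 1) (by positivity)
  refine ⟨M.toNNReal, (convex_closedBall 0 R).lipschitzOnWith_of_nnnorm_hasFDerivWithin_le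
    (fun x _ => (hf x).hasFDerivWithinAt) fun x hx => ?_⟩
  rw [← NNReal.coe_le_coe, Real.coe_toNNReal', coe_nnnorm]
  exact le_max_of_le_left (hM x ((mem_closedBall_zero_iff.1 hx).trans (le_max_left R 1)))

theorem continuous_of_forall_lipschitzOnWith_closedBall {E X : Type*} [NormedAddCommGroup E]
    [PseudoMetricSpace X] {f : E → X} (hf : ∀ R, ∃ K, LipschitzOnWith K f (closedBall 0 R)) :
    Continuous f := by
  refine continuous_iff_continuousAt.2 fun x => ?_
  obtain ⟨K, hK⟩ := hf (‖x‖ + 1)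
  exact hK.continuousOn.continuousAt (closedBall_mem_nhds_of_mem (by simp))

theorem isLocalHomeomorph_of_hasStrictFDerivAt {𝕜 E G : Type*} [NontriviallyNormedField 𝕜]
    [NormedAddCommGroup E] [NormedSpace 𝕜 E] [CompleteSpace E] [NormedAddCommGroup G]
    [NormedSpace 𝕜 G] {f : E → G} {e : E → E ≃L[𝕜] G}
    (hf : ∀ x, HasStrictFDerivAt f (e x : E →L[𝕜] G) x) : IsLocalHomeomorph f :=
  .mk f fun x => ⟨(hf x).toOpenPartialHomeomorph f, (hf x).mem_toOpenPartialHomeomorph_source,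
    fun _ _ => rfl⟩

section Charts

variable {E G : Type*} [NormedAddCommGroup E] [NormedSpace ℝ E] [CompleteSpace E]
  [NormedAddCommGroup G] [NormedSpace ℝ G]

theorem exists_openPartialHomeomorph_closedBall_subset_target {f : E → G} {f' : E → E →L[ℝ] G}
    {x₀ : E} {r q : ℝ} (hr : 0 < r) (hq : 0 < q) (hf : ∀ x ∈ ball x₀ r, HasFDerivAt f (f' x) x)
    (e : E ≃L[ℝ] G) (he : ‖(e.symm : G →L[ℝ] E)‖ ≤ q)
    (hf' : ∀ x ∈ ball x₀ r, ‖f' x - (e : E →L[ℝ] G)‖ ≤ (2 * q)⁻¹) :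
    ∃ Φ : OpenPartialHomeomorph E G,
      ⇑Φ = f ∧ x₀ ∈ Φ.source ∧ closedBall (f x₀) (r / (4 * q)) ⊆ Φ.target := by
  set c : ℝ≥0 := (2 * q)⁻¹.toNNReal
  have hc : (c : ℝ) = (2 * q)⁻¹ := Real.coe_toNNReal _ (by positivity)
  have happrox : ApproximatesLinearOn f (e : E →L[ℝ] G) (ball x₀ r) c := fun x hx y hy => by
    rw [hc]
    exact (convex_ball x₀ r).norm_image_sub_le_of_norm_hasFDerivWithin_le'
      (fun z hz => (hf z hz).hasFDerivWithinAt) hf' hy hx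
  rcases subsingleton_or_nontrivial E with hE | hE
  -- `‖e.symm‖ = 0` here, so `c < ‖e.symm‖₊⁻¹` fails and the target is handled directly.
  · refine ⟨happrox.toOpenPartialHomeomorph f _ (.inl hE) isOpen_ball, rfl, mem_ball_self hr,
      fun y _ => ?_⟩
    have := e.symm.toEquiv.subsingleton
    exact Subsingleton.elim (f x₀) y ▸ mem_image_of_mem f (mem_ball_self hr)
  have hN : 0 < ‖(e.symm : G →L[ℝ] E)‖ := e.norm_symm_pos
  have hqN : q⁻¹ ≤ ‖(e.symm : G →L[ℝ] E)‖⁻¹ := inv_anti₀ hN he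
  have hcN : c < ‖(e.symm : G →L[ℝ] E)‖₊⁻¹ := by
    rw [← NNReal.coe_lt_coe, hc, NNReal.coe_inv, coe_nnnorm]
    refine lt_of_lt_of_le ?_ hqN
    rw [mul_inv]
    linarith [inv_pos.2 hq]
  refine ⟨happrox.toOpenPartialHomeomorph f _ (.inr hcN) isOpen_ball, rfl, mem_ball_self hr,
    (closedBall_subset_closedBall ?_).trans (happrox.closedBall_subset_target (.inr hcN)
      isOpen_ball (half_pos hr).le (closedBall_subset_ball (half_lt_self hr)))⟩
  rw [NNReal.coe_inv, coe_nnnorm, hc]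
  calc r / (4 * q) = (q⁻¹ - (2 * q)⁻¹) * (r / 2) := by field_simp; ring
    _ ≤ _ := by gcongr

def HasUniformCharts (f : E → G) : Prop :=
  ∀ R, ∃ ρ > 0, ∀ x ∈ closedBall (0 : E) R, ∃ Φ : OpenPartialHomeomorph E G,
    ⇑Φ = f ∧ x ∈ Φ.source ∧ closedBall (f x) ρ ⊆ Φ.target

theorem hasUniformCharts_of_uniformContinuousOn {f : E → G} {e : E → E ≃L[ℝ] G}
    (hf : ∀ x, HasFDerivAt f (e x : E →L[ℝ] G) x)
    (he : ∀ R, UniformContinuousOn (fun x => (e x : E →L[ℝ] G)) (closedBall 0 R))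
    (he_symm : ∀ R, ∃ q, ∀ x ∈ closedBall (0 : E) R, ‖((e x).symm : G →L[ℝ] E)‖ ≤ q) :
    HasUniformCharts f := by
  intro R
  obtain ⟨q, hq⟩ := he_symm R
  set q' := max q 1
  obtain ⟨δ, hδ, hclose⟩ := Metric.uniformContinuousOn_iff_le.1 (he (R + 1)) (2 * q')⁻¹
    (by positivity)
  set r := min δ 1
  refine ⟨r / (4 * q'), by positivity, fun x₀ hx₀ => ?_⟩
  refine exists_openPartialHomeomorph_closedBall_subset_target (by positivity) (by positivity)
    (fun x _ => hf x) (e x₀) ((hq x₀ hx₀).trans (le_max_left q 1)) fun x hx => ?_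
  have hx : ‖x - x₀‖ < r := mem_ball_iff_norm.1 hx
  have hr₁ : r ≤ 1 := min_le_right δ 1
  rw [← dist_eq_norm]
  refine hclose x ?_ x₀ (closedBall_subset_closedBall (by linarith) hx₀) ?_
  · rw [mem_closedBall_zero_iff]
    linarith [norm_le_norm_add_norm_sub' x x₀, mem_closedBall_zero_iff.1 hx₀]
  · rw [dist_eq_norm]
    exact hx.le.trans (min_le_left δ 1)

end Charts

section Lifts

variable {E G : Type*} [NormedAddCommGroup E] [NormedAddCommGroup G] [NormedSpace ℝ G]
  {F : E → G} {c c' : G} {T : ℝ} {u v : ℝ → E}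

structure IsSegmentLift (F : E → G) (c : G) (T : ℝ) (u : ℝ → E) : Prop where
  continuousOn : ContinuousOn u (Icc 0 T)
  map_zero : u 0 = 0
  apply_eq : ∀ s ∈ Icc 0 T, F (u s) = F 0 + s • c

theorem isSegmentLift_zero (h : ∀ s ∈ Icc 0 T, s • c = 0) : IsSegmentLift F c T fun _ => 0 where
  continuousOn := continuousOn_const
  map_zero := rfl
  apply_eq s hs := by rw [h s hs, add_zero]

namespace IsSegmentLift

theorem mono {T' : ℝ} (hu : IsSegmentLift F c T u) (hT : T' ≤ T) : IsSegmentLift F c T' u where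
  continuousOn := hu.continuousOn.mono (Icc_subset_Icc_right hT)
  map_zero := hu.map_zero
  apply_eq s hs := hu.apply_eq s (Icc_subset_Icc_right hT hs)

theorem extend {t₀ : ℝ} (hu : IsSegmentLift F c t₀ u) (ht₀ : 0 ≤ t₀)
    (Φ : OpenPartialHomeomorph E G) (hΦ : ⇑Φ = F) (hsource : u t₀ ∈ Φ.source)
    (htarget : ∀ s ∈ Icc t₀ T, F 0 + s • c ∈ Φ.target) :
    IsSegmentLift F c T fun s => if s ≤ t₀ then u s else Φ.symm (F 0 + s • c) where
  continuousOn := by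
    refine ContinuousOn.if (fun s hs => ?_) (hu.continuousOn.mono fun s hs => ?_)
      (ContinuousOn.mono (s := Icc t₀ T) ?_ fun s hs => ?_)
    · have hst₀ : s ∈ frontier (Iic t₀) := hs.2
      rw [frontier_Iic, mem_singleton_iff] at hst₀
      subst hst₀
      rw [← hu.apply_eq s ⟨ht₀, le_rfl⟩, ← hΦ, Φ.left_inv hsource]
    · exact ⟨hs.1.1, isClosed_Iic.closure_subset hs.2⟩
    · exact Φ.continuousOn_symm.comp (by fun_prop) htarget
    · exact ⟨closure_minimal (fun x hx => (not_le.1 hx).le) isClosed_Ici hs.2, hs.1.2⟩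
  map_zero := by simp [ht₀, hu.map_zero]
  apply_eq s hs := by
    split_ifs with hst₀
    · exact hu.apply_eq s ⟨hs.1, hst₀⟩
    · have := Φ.right_inv (htarget s ⟨(not_le.1 hst₀).le, hs.2⟩)
      rwa [hΦ] at this

theorem eqOn (hF : IsLocallyInjective F) (hu : IsSegmentLift F c T u)
    (hv : IsSegmentLift F c T v) (hT : 0 ≤ T) : EqOn u v (Icc 0 T) :=
  (T2Space.isSeparatedMap F).eqOn_of_comp_eqOn hF isPreconnected_Icc hu.continuousOn
    hv.continuousOn (fun s hs => (hu.apply_eq s hs).trans (hv.apply_eq s hs).symm)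
    ⟨le_rfl, hT⟩ (hu.map_zero.trans hv.map_zero.symm)

variable [NormedSpace ℝ E] [CompleteSpace E] {e : E → E ≃L[ℝ] G}

theorem hasDerivWithinAt (hF : ∀ x, HasStrictFDerivAt F (e x : E →L[ℝ] G) x)
    (hu : IsSegmentLift F c T u) {t : ℝ} (ht : t ∈ Ico 0 T) :
    HasDerivWithinAt u ((e (u t)).symm c) (Ici t) t := by
  have hFt := hF (u t)
  set g := hFt.localInverse F (e (u t)) (u t)
  have hut : F (u t) = F 0 + t • c := hu.apply_eq t (Ico_subset_Icc_self ht)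
  have hg : HasDerivAt (fun s => g (F 0 + s • c)) ((e (u t)).symm c) t := by
    have hg' := hFt.to_localInverse.hasFDerivAt
    rw [hut] at hg'
    simpa [Function.comp_def] using
      hg'.comp_hasDerivAt t (((hasDerivAt_id t).smul_const c).const_add (F 0))
  have hIcc : Icc 0 T ∈ 𝓝[≥] t :=
    mem_of_superset (Icc_mem_nhdsGE ht.2) (Icc_subset_Icc_left ht.1)
  have hu_eq : u =ᶠ[𝓝[≥] t] fun s => g (F 0 + s • c) := by
    filter_upwards [((hu.continuousOn t (Ico_subset_Icc_self ht)).mono_of_mem_nhdsWithin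
      hIcc).eventually hFt.eventually_left_inverse, hIcc] with s hgs hs
    rw [← hgs, hu.apply_eq s hs]
  exact hg.hasDerivWithinAt.congr_of_eventuallyEq hu_eq (hu_eq.eq_of_nhdsWithin self_mem_Ici)

theorem norm_le_gronwallBound (hF : ∀ x, HasStrictFDerivAt F (e x : E →L[ℝ] G) x) {a b C : ℝ}
    (ha : 0 ≤ a) (hb : 0 ≤ b) (he : ∀ x, ‖((e x).symm : G →L[ℝ] E)‖ ≤ a * ‖x‖ + b)
    (hu : IsSegmentLift F c T u) (hT : T ≤ 1) (hC : ‖c‖ ≤ C) {t : ℝ} (ht : t ∈ Icc 0 T) :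
    ‖u t‖ ≤ gronwallBound 0 (a * C) (b * C) 1 := by
  have hC₀ : 0 ≤ C := (norm_nonneg c).trans hC
  have hderiv_le : ∀ s ∈ Ico 0 T, ‖(e (u s)).symm c‖ ≤ a * C * ‖u s‖ + b * C := fun s _ =>
    calc ‖(e (u s)).symm c‖ ≤ ‖((e (u s)).symm : G →L[ℝ] E)‖ * ‖c‖ :=
          ((e (u s)).symm : G →L[ℝ] E).le_opNorm c
      _ ≤ (a * ‖u s‖ + b) * C :=
          mul_le_mul (he _) hC (norm_nonneg _) ((norm_nonneg _).trans (he _))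
      _ = a * C * ‖u s‖ + b * C := by ring
  calc ‖u t‖ ≤ gronwallBound 0 (a * C) (b * C) (t - 0) :=
        norm_le_gronwallBound_of_norm_deriv_right_le hu.continuousOn
          (fun s hs => hu.hasDerivWithinAt hF hs) (by simp [hu.map_zero]) hderiv_le t ht
    _ ≤ gronwallBound 0 (a * C) (b * C) 1 :=
        gronwallBound_mono le_rfl (by positivity) (by positivity) (by linarith [ht.2])

theorem dist_le_gronwallBound (hF : ∀ x, HasStrictFDerivAt F (e x : E →L[ℝ] G) x) {s : Set E}
    {K : ℝ≥0} {q : ℝ} (hK : LipschitzOnWith K (fun x => (e x).symm c) s)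
    (hq : ∀ x ∈ s, ‖((e x).symm : G →L[ℝ] E)‖ ≤ q) (hu : IsSegmentLift F c T u)
    (hv : IsSegmentLift F c' T v) (hus : ∀ t ∈ Icc 0 T, u t ∈ s) (hvs : ∀ t ∈ Icc 0 T, v t ∈ s)
    {t : ℝ} (ht : t ∈ Icc 0 T) :
    dist (u t) (v t) ≤ gronwallBound 0 K (q * ‖c - c'‖) t := by
  -- `v` is an approximate solution of the equation `x' = (e x).symm c` solved by `u`.
  have hv_approx : ∀ t ∈ Ico 0 T, dist ((e (v t)).symm c') ((e (v t)).symm c) ≤ q * ‖c - c'‖ :=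
    fun t ht => by
      rw [dist_eq_norm, ← map_sub, norm_sub_rev c]
      exact (((e (v t)).symm : G →L[ℝ] E).le_opNorm _).trans
        (mul_le_mul_of_nonneg_right (hq _ (hvs t (Ico_subset_Icc_self ht))) (norm_nonneg _))
  simpa using dist_le_of_approx_trajectories_ODE_of_mem (v := fun _ x => (e x).symm c)
    (fun _ _ => hK) hu.continuousOn (fun t ht => hu.hasDerivWithinAt hF ht)
    (fun t _ => (dist_self _).le) (fun t ht => hus t (Ico_subset_Icc_self ht)) hv.continuousOn
    (fun t ht => hv.hasDerivWithinAt hF ht) hv_approx (fun t ht => hvs t (Ico_subset_Icc_self ht))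
    (by simp [hu.map_zero, hv.map_zero]) t ht

end IsSegmentLift

end Lifts

section GlobalInverse

variable {E G : Type*} [NormedAddCommGroup E] [NormedSpace ℝ E] [CompleteSpace E]
  [NormedAddCommGroup G] [NormedSpace ℝ G] {F : E → G} {e : E → E ≃L[ℝ] G} {a b : ℝ}

theorem exists_isSegmentLift (hF : ∀ x, HasStrictFDerivAt F (e x : E →L[ℝ] G) x)
    (hcharts : HasUniformCharts F) (ha : 0 ≤ a) (hb : 0 ≤ b)
    (he : ∀ x, ‖((e x).symm : G →L[ℝ] E)‖ ≤ a * ‖x‖ + b) (c : G) :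
    ∃ u, IsSegmentLift F c 1 u := by
  obtain ⟨ρ, hρ, hchart⟩ := hcharts (gronwallBound 0 (a * ‖c‖) (b * ‖c‖) 1)
  set η := ρ / (‖c‖ + 1)
  have hη : 0 < η := by positivity
  have hstep : ∀ t₀ ∈ Icc (0 : ℝ) 1, ∀ u, IsSegmentLift F c t₀ u →
      ∃ v, IsSegmentLift F c (min (t₀ + η) 1) v := by
    intro t₀ ht₀ u hu
    have ht₀' : t₀ ∈ Icc 0 t₀ := ⟨ht₀.1, le_rfl⟩
    obtain ⟨Φ, hΦ, hsource, htarget⟩ := hchart (u t₀) (mem_closedBall_zero_iff.2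
      (hu.norm_le_gronwallBound hF ha hb he ht₀.2 le_rfl ht₀'))
    refine ⟨_, hu.extend ht₀.1 Φ hΦ hsource fun s hs => htarget ?_⟩
    have hsη : s - t₀ ≤ η := by linarith [hs.2.trans (min_le_left _ _)]
    rw [mem_closedBall, hu.apply_eq t₀ ht₀', dist_add_left, dist_eq_norm, ← sub_smul, norm_smul,
      Real.norm_of_nonneg (sub_nonneg.2 hs.1)]
    calc (s - t₀) * ‖c‖ ≤ η * ‖c‖ := by gcongr
      _ = ρ * (‖c‖ / (‖c‖ + 1)) := by ring
      _ ≤ ρ * 1 := by gcongr; exact div_le_one_of_le₀ (by linarith) (by positivity)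
      _ = ρ := mul_one ρ
  have hlift : ∀ n : ℕ, ∃ u, IsSegmentLift F c (min (n * η) 1) u := by
    intro n
    induction n with
    | zero => exact ⟨_, isSegmentLift_zero fun s hs => by simp_all⟩
    | succ n ih =>
      obtain ⟨u, hu⟩ := ih
      obtain ⟨v, hv⟩ := hstep _ ⟨by positivity, min_le_right _ _⟩ u hu
      refine ⟨v, hv.mono ?_⟩
      push_cast
      rw [← min_add_add_right, min_assoc, min_eq_right (by linarith : (1 : ℝ) ≤ 1 + η), add_mul,
        one_mul]
  obtain ⟨n, hn⟩ := exists_nat_ge η⁻¹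
  obtain ⟨u, hu⟩ := hlift n
  rw [min_eq_right ((inv_le_iff_one_le_mul₀ hη).1 hn)] at hu
  exact ⟨u, hu⟩

theorem continuous_isSegmentLift_endpoint (hF : ∀ x, HasStrictFDerivAt F (e x : E →L[ℝ] G) x)
    (hlip : ∀ R, ∃ K, LipschitzOnWith K (fun x => ((e x).symm : G →L[ℝ] E)) (closedBall 0 R))
    (ha : 0 ≤ a) (hb : 0 ≤ b) (he : ∀ x, ‖((e x).symm : G →L[ℝ] E)‖ ≤ a * ‖x‖ + b)
    {lift : G → ℝ → E} (hlift : ∀ c, IsSegmentLift F c 1 (lift c)) :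
    Continuous fun c => lift c 1 := by
  refine continuous_iff_continuousAt.2 fun c₀ => ?_
  set C := ‖c₀‖ + 1
  set R := gronwallBound 0 (a * C) (b * C) 1
  obtain ⟨K, hK⟩ := hlip R
  have hvf := (ContinuousLinearMap.apply ℝ E c₀).lipschitz.comp_lipschitzOnWith hK
  have hq : ∀ x ∈ closedBall (0 : E) R, ‖((e x).symm : G →L[ℝ] E)‖ ≤ a * R + b := fun x hx =>
    (he x).trans (by gcongr; exact mem_closedBall_zero_iff.1 hx)
  have hbounded : ∀ c, ‖c - c₀‖ ≤ 1 → ∀ t ∈ Icc (0 : ℝ) 1, lift c t ∈ closedBall 0 R :=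
    fun c hc t ht => mem_closedBall_zero_iff.2 <| (hlift c).norm_le_gronwallBound hF ha hb he
      le_rfl (by linarith [norm_le_norm_add_norm_sub' c c₀]) ht
  have hclose : ∀ᶠ c in 𝓝 c₀, dist (lift c 1) (lift c₀ 1) ≤
      gronwallBound 0 (‖ContinuousLinearMap.apply ℝ E c₀‖₊ * K) ((a * R + b) * ‖c₀ - c‖) 1 := by
    filter_upwards [closedBall_mem_nhds c₀ one_pos] with c hc
    rw [mem_closedBall, dist_eq_norm] at hc
    rw [dist_comm]
    exact (hlift c₀).dist_le_gronwallBound hF hvf hq (hlift c)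
      (hbounded c₀ (by simp)) (hbounded c hc) ⟨zero_le_one, le_rfl⟩
  refine tendsto_iff_dist_tendsto_zero.2 (squeeze_zero' (.of_forall fun _ => dist_nonneg) hclose ?_)
  refine ((gronwallBound_continuous_ε _ _ _).comp (by fun_prop)).tendsto' c₀ _ ?_
  simp [gronwallBound_ε0_δ0]

theorem exists_homeomorph_of_norm_symm_le (hF : ∀ x, HasFDerivAt F (e x : E →L[ℝ] G) x)
    (hlip : ∀ R, ∃ K, LipschitzOnWith K (fun x => (e x : E →L[ℝ] G)) (closedBall 0 R))
    (ha : 0 ≤ a) (hb : 0 ≤ b) (he : ∀ x, ‖((e x).symm : G →L[ℝ] E)‖ ≤ a * ‖x‖ + b) :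
    ∃ h : E ≃ₜ G, ⇑h = F := by
  have he_bdd : ∀ R, ∀ x ∈ closedBall (0 : E) R, ‖((e x).symm : G →L[ℝ] E)‖ ≤ a * R + b :=
    fun R x hx => (he x).trans (by gcongr; exact mem_closedBall_zero_iff.1 hx)
  have hstrict : ∀ x, HasStrictFDerivAt F (e x : E →L[ℝ] G) x := fun x =>
    hasStrictFDerivAt_of_hasFDerivAt_of_continuousAt (.of_forall hF)
      (continuous_of_forall_lipschitzOnWith_closedBall hlip).continuousAt
  have hcharts : HasUniformCharts F := hasUniformCharts_of_uniformContinuousOn hF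
    (fun R => (hlip R).elim fun _ hK => hK.uniformContinuousOn) fun R => ⟨_, he_bdd R⟩
  have hlip_symm : ∀ R, ∃ K, LipschitzOnWith K (fun x => ((e x).symm : G →L[ℝ] E))
      (closedBall 0 R) := fun R =>
    (hlip R).elim fun _ hK => ⟨_, hK.continuousLinearEquiv_symm (he_bdd R)⟩
  have hF_loc := isLocalHomeomorph_of_hasStrictFDerivAt hstrict
  choose lift hlift using exists_isSegmentLift hstrict hcharts ha hb he
  set g := fun y => lift (y - F 0) 1
  have hright : ∀ y, F (g y) = y := fun y => by
    simpa using (hlift (y - F 0)).apply_eq 1 ⟨zero_le_one, le_rfl⟩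
  have hg : Continuous g :=
    (continuous_isSegmentLift_endpoint hstrict hlip_symm ha hb he hlift).comp
      (continuous_sub_right _)
  have hg₀ : g (F 0) = 0 := by
    simpa [g] using (hlift 0).eqOn hF_loc.isLocallyInjective
      (isSegmentLift_zero fun s _ => smul_zero s) zero_le_one ⟨zero_le_one, le_rfl⟩
  have hleft : ∀ x, g (F x) = x := congr_fun <| (T2Space.isSeparatedMap F).eq_of_comp_eq
    hF_loc.isLocallyInjective (hg.comp hF_loc.continuous) continuous_id
    (funext fun x => hright (F x)) 0 hg₀
  exact ⟨{ toFun := F, invFun := g, left_inv := hleft, right_inv := hright,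
            continuous_toFun := hF_loc.continuous, continuous_invFun := hg }, rfl⟩

end GlobalInverse

/-- Hadamard-type theorem. If `F : H → H` is twice Fréchet
differentiable, with bounds `‖F'(u)‖ ≤ M₁(R)`, `‖F''(u)‖ ≤ M₂(R)` on each ball
`{‖u‖ ≤ R}`, and `F'(u)` is boundedly invertible with `‖[F'(u)]⁻¹‖ ≤ a‖u‖ + b`
for all `u` (`a ≥ 0`, `b > 0`), then `F` is a homeomorphism of `H` onto `H`. -/
theorem dsm_global_homeomorphism
    {H : Type*} [NormedAddCommGroup H] [InnerProductSpace ℝ H] [CompleteSpace H]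
    (F : H → H) (F' : H → H →L[ℝ] H) (F'' : H → H →L[ℝ] H →L[ℝ] H)
    (Finv : H → H →L[ℝ] H)
    (hF' : ∀ u, HasFDerivAt F (F' u) u)
    (hF'' : ∀ u, HasFDerivAt F' (F'' u) u)
    (hM : ∀ R > (0:ℝ), ∃ M₁ M₂ : ℝ, ∀ u : H, ‖u‖ ≤ R → ‖F' u‖ ≤ M₁ ∧ ‖F'' u‖ ≤ M₂)
    (a b : ℝ) (ha : 0 ≤ a) (hb : 0 < b)
    (hinv_left : ∀ u, (Finv u).comp (F' u) = ContinuousLinearMap.id ℝ H)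
    (hinv_right : ∀ u, (F' u).comp (Finv u) = ContinuousLinearMap.id ℝ H)
    (hinv_bound : ∀ u : H, ‖Finv u‖ ≤ a * ‖u‖ + b) :
    ∃ e : H ≃ₜ H, ⇑e = F := by
  have hF''_bdd : ∀ R > (0 : ℝ), ∃ M, ∀ u : H, ‖u‖ ≤ R → ‖F'' u‖ ≤ M := fun R hR => by
    obtain ⟨_, M₂, hM₂⟩ := hM R hR
    exact ⟨M₂, fun u hu => (hM₂ u hu).2⟩
  exact exists_homeomorph_of_norm_symm_le
    (e := fun u => .equivOfInverse' (F' u) (Finv u) (hinv_right u) (hinv_left u))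
    hF' (exists_lipschitzOnWith_closedBall hF'' hF''_bdd) ha hb.le hinv_bound
end

section
/- Let H be a real Hilbert space and let F : H → H be twice Fréchet differentiable. Suppose that for every R > 0 there exist constants M₁(R), M₂(R) such that ‖F′(u)‖ ≤ M₁(R) and ‖F″(u)‖ ≤ M₂(R) for all u with ‖u‖ ≤ R, and suppose there exist constants a ≥ 0 and b > 0 such that for every u ∈ H the derivative F′(u) is boundedly invertible with ‖[F′(u)]⁻¹‖ ≤ a‖u‖ + b. Then F is injective: F(u) = F(v) implies u = v. -/
/-!
Suppose `F u₀ = F u₁ =: p` and let `γ` be the segment from `u₀` to `u₁`. For every `s ∈ [0, 1]`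
lift the straight path from `F (γ s)` to `p` through `F`, i.e. solve
`u' = F'(u)⁻¹ (p - F (γ s))`, `u 0 = γ s` on `[0, 1]`; then `F (u 1) = p`. The growth bound on
`‖F'(u)⁻¹‖` and Grönwall's inequality keep all these solutions in one ball, on which `F'(u)⁻¹` is
Lipschitz because `F''` is bounded there, so the endpoints `u 1` depend continuously on `s`. They
lie in the fibre `F⁻¹(p)`, which is discrete by the inverse function theorem, hence they do not
depend on `s`. For `s = 0` and `s = 1` the lifted path is constant, so `u₀ = u₁`.
-/

open Set Metric Real NNReal

lemma gronwallBound_le_mul_exp {δ K ε x : ℝ} (hK : 0 ≤ K) (hε : 0 ≤ ε) :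
    gronwallBound δ K ε x ≤ (δ + ε * x) * exp (K * x) := by
  rcases hK.eq_or_lt with rfl | hK
  · simp [gronwallBound_K0]
  have hexp : exp (K * x) - 1 ≤ K * x * exp (K * x) := by
    have h := add_one_le_exp (-(K * x))
    rw [exp_neg] at h
    have := exp_pos (K * x)
    field_simp at h
    nlinarith
  rw [gronwallBound_of_K_ne_0 hK.ne']
  have : ε / K * (exp (K * x) - 1) ≤ ε * x * exp (K * x) := by
    rw [div_mul_eq_mul_div, div_le_iff₀ hK]
    nlinarith [mul_le_mul_of_nonneg_left hexp hε]
  linarith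

section RadialRetraction

variable {E : Type*} [NormedAddCommGroup E] [NormedSpace ℝ E] {R : ℝ}

noncomputable def radialRetraction (R : ℝ) (x : E) : E := min 1 (R / ‖x‖) • x

lemma norm_radialRetraction (hR : 0 ≤ R) (x : E) : ‖radialRetraction R x‖ = min ‖x‖ R := by
  rcases eq_or_ne x 0 with rfl | hx
  · simp [radialRetraction, hR]
  have hx' : 0 < ‖x‖ := norm_pos_iff.mpr hx
  rw [radialRetraction, norm_smul, Real.norm_of_nonneg (le_min zero_le_one (by positivity)),
    min_mul_of_nonneg _ _ hx'.le, one_mul, div_mul_cancel₀ _ hx'.ne']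

lemma radialRetraction_of_norm_le {x : E} (hx : ‖x‖ ≤ R) : radialRetraction R x = x := by
  rcases eq_or_ne x 0 with rfl | hx0
  · simp [radialRetraction]
  rw [radialRetraction, min_eq_left ((one_le_div (norm_pos_iff.mpr hx0)).mpr hx), one_smul]

lemma lipschitzWith_radialRetraction (hR : 0 ≤ R) :
    LipschitzWith 2 (radialRetraction R : E → E) := by
  set c : E → ℝ := fun z => min 1 (R / ‖z‖)
  have hc0 : ∀ z, 0 ≤ c z := fun z => le_min zero_le_one (by positivity)
  have hc1 : ∀ z, c z ≤ 1 := fun z => min_le_left _ _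
  have hcnorm : ∀ z, c z * ‖z‖ = min ‖z‖ R := fun z => by
    simpa [radialRetraction, norm_smul, Real.norm_of_nonneg (hc0 z), c] using
      norm_radialRetraction hR z
  -- For `‖y‖ ≤ ‖x‖` the term `(c x - c y) • y` below is controlled by
  -- `c y ‖y‖ = min ‖y‖ R ≤ min ‖x‖ R = c x ‖x‖`.
  have key : ∀ x y : E, ‖y‖ ≤ ‖x‖ →
      ‖radialRetraction R x - radialRetraction R y‖ ≤ 2 * ‖x - y‖ := by
    intro x y hxy
    have hsplit :
        radialRetraction R x - radialRetraction R y = c x • (x - y) + (c x - c y) • y := by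
      simp only [radialRetraction, c, smul_sub, sub_smul]; abel
    have h1 : ‖c x • (x - y)‖ ≤ ‖x - y‖ := by
      rw [norm_smul, Real.norm_of_nonneg (hc0 x)]
      exact mul_le_of_le_one_left (norm_nonneg _) (hc1 x)
    have h2 : ‖(c x - c y) • y‖ ≤ ‖x - y‖ := by
      rcases eq_or_ne y 0 with rfl | hy
      · simp
      have hcy : c x ≤ c y := min_le_min_left _ <|
        div_le_div_of_nonneg_left hR (norm_pos_iff.mpr hy) hxy
      rw [norm_smul, Real.norm_of_nonpos (by linarith), neg_sub]
      calc (c y - c x) * ‖y‖ = min ‖y‖ R - c x * ‖y‖ := by rw [← hcnorm]; ring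
        _ ≤ min ‖x‖ R - c x * ‖y‖ := by gcongr
        _ = c x * (‖x‖ - ‖y‖) := by rw [← hcnorm]; ring
        _ ≤ ‖x‖ - ‖y‖ := mul_le_of_le_one_left (by linarith) (hc1 x)
        _ ≤ ‖x - y‖ := norm_sub_norm_le x y
    rw [hsplit]
    linarith [norm_add_le (c x • (x - y)) ((c x - c y) • y)]
  refine LipschitzWith.of_dist_le_mul fun x y => ?_
  rw [dist_eq_norm, dist_eq_norm, NNReal.coe_ofNat]
  rcases le_total ‖y‖ ‖x‖ with h | h
  · exact key x y h
  · rw [norm_sub_rev, norm_sub_rev x]; exact key y x h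

end RadialRetraction

section ODEOnUnitInterval

variable {E : Type*} [NormedAddCommGroup E] [NormedSpace ℝ E]

lemma eq_add_of_forall_hasDerivWithinAt_Icc {h : ℝ → E} {w : E}
    (hh : ∀ t ∈ Icc (0 : ℝ) 1, HasDerivWithinAt h w (Icc 0 1) t) : h 1 = h 0 + w := by
  have hd : ∀ t ∈ Icc (0 : ℝ) 1, HasDerivWithinAt (fun t => h t - t • w) 0 (Icc 0 1) t :=
    fun t ht => by simpa using (hh t ht).fun_sub ((hasDerivWithinAt_id t _).smul_const w)
  have := norm_image_sub_le_of_norm_deriv_le_segment' hd (fun _ _ => norm_zero.le) 1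
    (right_mem_Icc.mpr zero_le_one)
  rw [zero_mul, norm_le_zero_iff] at this
  simp only [one_smul, zero_smul, sub_zero] at this
  rw [← sub_eq_zero, ← this]; abel

lemma apply_one_eq_add_of_forall_hasDerivWithinAt_Icc {F : Type*} [NormedAddCommGroup F]
    [NormedSpace ℝ F] {f : E → F} {T : E → E →L[ℝ] F} {S : E → F →L[ℝ] E}
    (hf : ∀ x, HasFDerivAt f (T x) x) (hTS : ∀ x, (T x).comp (S x) = .id ℝ F) {g : ℝ → E}
    {w : F} (hg : ∀ t ∈ Icc (0 : ℝ) 1, HasDerivWithinAt g (S (g t) w) (Icc 0 1) t) :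
    f (g 1) = f (g 0) + w :=
  eq_add_of_forall_hasDerivWithinAt_Icc (h := f ∘ g) fun t ht => by
    simpa [← ContinuousLinearMap.comp_apply, hTS] using (hf (g t)).comp_hasDerivWithinAt t (hg t ht)

lemma exists_forall_hasDerivWithinAt_Icc_of_lipschitzWith [CompleteSpace E] {v : E → E}
    {K : ℝ≥0} {L : ℝ} (hv : LipschitzWith K v) (hL : ∀ x, ‖v x‖ ≤ L) (x₀ : E) :
    ∃ f : ℝ → E, f 0 = x₀ ∧ ∀ t ∈ Icc (0 : ℝ) 1, HasDerivWithinAt f (v (f t)) (Icc 0 1) t :=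
  IsPicardLindelof.exists_eq_forall_mem_Icc_hasDerivWithinAt₀
    (f := fun _ => v) (t₀ := ⟨0, left_mem_Icc.mpr zero_le_one⟩) (a := L.toNNReal)
    (L := L.toNNReal) (K := K)
    { lipschitzOnWith := fun _ _ => hv.lipschitzOnWith
      continuousOn := fun _ _ => continuousOn_const
      norm_le := fun _ _ x _ => (hL x).trans (Real.le_coe_toNNReal L)
      mul_max_le := by simp }

variable {A : E → E →L[ℝ] E} {Λ : ℝ≥0} {C : ℝ}

lemma LipschitzWith.clm_apply_const (hA : LipschitzWith Λ A) (w : E) :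
    LipschitzWith (Λ * ‖w‖₊) fun x => A x w := by
  refine LipschitzWith.of_dist_le_mul fun x y => ?_
  rw [dist_eq_norm, ← sub_apply, NNReal.coe_mul, coe_nnnorm, mul_right_comm]
  exact ((A x - A y).le_opNorm w).trans <| mul_le_mul_of_nonneg_right
    (by simpa [dist_eq_norm] using hA.dist_le_mul x y) (norm_nonneg w)

lemma norm_le_of_forall_hasDerivWithinAt_clm_apply {a b : ℝ} (ha : 0 ≤ a) (hb : 0 ≤ b)
    (hA : ∀ x, ‖A x‖ ≤ a * ‖x‖ + b) {f : ℝ → E} {w : E}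
    (hf : ∀ t ∈ Icc (0 : ℝ) 1, HasDerivWithinAt f (A (f t) w) (Icc 0 1) t) {t : ℝ}
    (ht : t ∈ Icc (0 : ℝ) 1) : ‖f t‖ ≤ (‖f 0‖ + b * ‖w‖) * exp (a * ‖w‖) := by
  have hgr := norm_le_gronwallBound_of_norm_deriv_right_le (K := a * ‖w‖) (ε := b * ‖w‖)
    (fun t ht => (hf t ht).continuousWithinAt)
    (fun t ht => (hf t (Ico_subset_Icc_self ht)).mono_of_mem_nhdsWithin
      (Icc_mem_nhdsGE_of_mem ht))
    le_rfl (fun t _ => ((A (f t)).le_of_opNorm_le_of_le (hA _) le_rfl).trans_eq (by ring)) t ht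
  rw [sub_zero] at hgr
  refine hgr.trans ((gronwallBound_le_mul_exp (by positivity) (by positivity)).trans ?_)
  gcongr (‖f 0‖ + ?_) * exp ?_ <;> exact mul_le_of_le_one_right (by positivity) ht.2

lemma dist_le_of_forall_hasDerivWithinAt_clm_apply (hA : LipschitzWith Λ A)
    (hC : ∀ x, ‖A x‖ ≤ C) {f g : ℝ → E} {w w' : E}
    (hf : ∀ t ∈ Icc (0 : ℝ) 1, HasDerivWithinAt f (A (f t) w) (Icc 0 1) t)
    (hg : ∀ t ∈ Icc (0 : ℝ) 1, HasDerivWithinAt g (A (g t) w') (Icc 0 1) t) :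
    dist (f 1) (g 1) ≤ (dist (f 0) (g 0) + C * dist w w') * exp (Λ * ‖w‖) := by
  have hC0 : 0 ≤ C := (norm_nonneg _).trans (hC 0)
  have hIci : ∀ {φ φ' : ℝ → E},
      (∀ t ∈ Icc (0 : ℝ) 1, HasDerivWithinAt φ (φ' t) (Icc 0 1) t) →
      ∀ t ∈ Ico (0 : ℝ) 1, HasDerivWithinAt φ (φ' t) (Ici t) t := fun hφ t ht =>
    (hφ t (Ico_subset_Icc_self ht)).mono_of_mem_nhdsWithin (Icc_mem_nhdsGE_of_mem ht)
  have hbound := dist_le_of_approx_trajectories_ODE (v := fun _ x => A x w) (εf := 0)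
    (εg := C * dist w w') (fun _ => hA.clm_apply_const w)
    (fun t ht => (hf t ht).continuousWithinAt) (hIci hf) (fun _ _ => (dist_self _).le)
    (fun t ht => (hg t ht).continuousWithinAt) (hIci hg)
    (fun t _ => by
      rw [dist_eq_norm, ← ContinuousLinearMap.map_sub, dist_comm, dist_eq_norm]
      exact ((A (g t)).le_opNorm _).trans (mul_le_mul_of_nonneg_right (hC _) (norm_nonneg _)))
    le_rfl 1 (right_mem_Icc.mpr zero_le_one)
  rw [zero_add, sub_zero] at hbound
  simpa using hbound.trans (gronwallBound_le_mul_exp (by positivity) (by positivity))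

lemma continuous_apply_one_of_forall_hasDerivWithinAt_clm_apply {X : Type*}
    [TopologicalSpace X] (hA : LipschitzWith Λ A) (hC : ∀ x, ‖A x‖ ≤ C) {f : X → ℝ → E}
    {w : X → E} (hf0 : Continuous fun s => f s 0) (hw : Continuous w)
    (hf : ∀ s, ∀ t ∈ Icc (0 : ℝ) 1, HasDerivWithinAt (f s) (A (f s t) (w s)) (Icc 0 1) t) :
    Continuous fun s => f s 1 := by
  refine continuous_iff_continuousAt.mpr fun s₀ => ?_
  rw [ContinuousAt, tendsto_iff_dist_tendsto_zero]
  have hlim : Filter.Tendsto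
      (fun s => (dist (f s₀ 0) (f s 0) + C * dist (w s₀) (w s)) * exp (Λ * ‖w s₀‖))
      (nhds s₀) (nhds 0) := by
    have h1 := tendsto_iff_dist_tendsto_zero.mp (hf0.tendsto s₀)
    have h2 := tendsto_iff_dist_tendsto_zero.mp (hw.tendsto s₀)
    simp only [dist_comm (f s₀ 0), dist_comm (w s₀)]
    simpa using (h1.add (h2.const_mul C)).mul_const (exp (Λ * ‖w s₀‖))
  refine squeeze_zero (fun _ => dist_nonneg) (fun s => ?_) hlim
  rw [dist_comm]
  exact dist_le_of_forall_hasDerivWithinAt_clm_apply hA hC (hf s₀) (hf s)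

end ODEOnUnitInterval

section Inverses

variable {𝕜 E F : Type*} [NontriviallyNormedField 𝕜] [NormedAddCommGroup E]
  [NormedSpace 𝕜 E] [NormedAddCommGroup F] [NormedSpace 𝕜 F]

lemma LipschitzOnWith.of_comp_eq_id {X : Type*} [PseudoMetricSpace X] {T : X → E →L[𝕜] F}
    {S : X → F →L[𝕜] E} {s : Set X} {K C : ℝ≥0} (hT : LipschitzOnWith K T s)
    (hleft : ∀ x ∈ s, (S x).comp (T x) = .id 𝕜 E)
    (hright : ∀ x ∈ s, (T x).comp (S x) = .id 𝕜 F)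
    (hS : ∀ x ∈ s, ‖S x‖ ≤ C) : LipschitzOnWith (C * K * C) S s := by
  refine LipschitzOnWith.of_dist_le_mul fun x hx y hy => ?_
  have hdiff : S x - S y = ((S x).comp (T y - T x)).comp (S y) := by
    rw [ContinuousLinearMap.comp_sub, ContinuousLinearMap.sub_comp,
      ContinuousLinearMap.comp_assoc, hright y hy, ContinuousLinearMap.comp_id, hleft x hx,
      ContinuousLinearMap.id_comp]
  rw [dist_eq_norm, hdiff, NNReal.coe_mul, NNReal.coe_mul]
  calc ‖((S x).comp (T y - T x)).comp (S y)‖ ≤ ‖S x‖ * ‖T y - T x‖ * ‖S y‖ :=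
        (ContinuousLinearMap.opNorm_comp_le _ _).trans
          (mul_le_mul_of_nonneg_right (ContinuousLinearMap.opNorm_comp_le _ _) (norm_nonneg _))
    _ ≤ C * (K * dist x y) * C := by
        gcongr
        · exact hS x hx
        · rw [← dist_eq_norm']; exact hT.dist_le_mul x hx y hy
        · exact hS y hy
    _ = C * K * C * dist x y := by ring

lemma isDiscrete_preimage_singleton_of_hasStrictFDerivAt [CompleteSpace E] [CompleteSpace F]
    {f : E → F} (hf : ∀ x, ∃ e : E ≃L[𝕜] F, HasStrictFDerivAt f (e : E →L[𝕜] F) x) (y : F) :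
    IsDiscrete (f ⁻¹' {y}) := by
  refine isDiscrete_iff_forall_mem_exists_isOpen.mpr fun x hx => ?_
  obtain ⟨e, he⟩ := hf x
  set φ := he.toOpenPartialHomeomorph f
  refine ⟨φ.source, φ.open_source, Set.ext fun z => ⟨fun ⟨hz, hzy⟩ => ?_, fun hz => ?_⟩⟩
  · exact φ.injOn hz he.mem_toOpenPartialHomeomorph_source (by simpa [φ] using hzy.trans hx.symm)
  · subst hz; exact ⟨he.mem_toOpenPartialHomeomorph_source, hx⟩

end Inverses

lemma isDiscrete_preimage_singleton_of_comp_eq_id {𝕜 E F : Type*} [RCLike 𝕜]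
    [NormedAddCommGroup E] [NormedSpace 𝕜 E] [CompleteSpace E] [NormedAddCommGroup F]
    [NormedSpace 𝕜 F] [CompleteSpace F] {f : E → F} {T : E → E →L[𝕜] F}
    {S : E → F →L[𝕜] E} (hf : ∀ x, HasFDerivAt f (T x) x) (hT : Continuous T)
    (hleft : ∀ x, (S x).comp (T x) = .id 𝕜 E) (hright : ∀ x, (T x).comp (S x) = .id 𝕜 F)
    (y : F) : IsDiscrete (f ⁻¹' {y}) :=
  isDiscrete_preimage_singleton_of_hasStrictFDerivAt (fun x =>
    ⟨.equivOfInverse' _ _ (hright x) (hleft x),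
      hasStrictFDerivAt_of_hasFDerivAt_of_continuousAt (.of_forall hf) hT.continuousAt⟩) y

lemma exists_lipschitzWith_eq_of_norm_le {E F : Type*} [NormedAddCommGroup E]
    [NormedSpace ℝ E] [NormedAddCommGroup F] [NormedSpace ℝ F] {T : E → E →L[ℝ] F}
    {T' : E → E →L[ℝ] E →L[ℝ] F} {S : E → F →L[ℝ] E} {a b R M : ℝ} (ha : 0 ≤ a) (hR : 0 ≤ R)
    (hT : ∀ x, HasFDerivAt T (T' x) x) (hT' : ∀ x, ‖x‖ ≤ R → ‖T' x‖ ≤ M)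
    (hleft : ∀ x, (S x).comp (T x) = .id ℝ E) (hright : ∀ x, (T x).comp (S x) = .id ℝ F)
    (hS : ∀ x, ‖S x‖ ≤ a * ‖x‖ + b) :
    ∃ (A : E → F →L[ℝ] E) (Λ : ℝ≥0), LipschitzWith Λ A ∧ (∀ x, ‖A x‖ ≤ a * R + b) ∧
      (∀ x, ‖A x‖ ≤ a * ‖x‖ + b) ∧ ∀ x, ‖x‖ ≤ R → A x = S x := by
  have hSR : ∀ x, ‖x‖ ≤ R → ‖S x‖ ≤ a * R + b := fun x hx => (hS x).trans (by gcongr)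
  have hS_le : ∀ x ∈ closedBall (0 : E) R, ‖S x‖ ≤ (a * R + b).toNNReal := fun x hx =>
    (hSR x (by simpa using hx)).trans (Real.le_coe_toNNReal _)
  have hT_lip : LipschitzOnWith M.toNNReal T (closedBall 0 R) :=
    (convex_closedBall 0 R).lipschitzOnWith_of_nnnorm_hasFDerivWithin_le
      (fun x _ => (hT x).hasFDerivWithinAt) fun x hx => by
        rw [← norm_toNNReal]; exact Real.toNNReal_le_toNNReal (hT' x (by simpa using hx))
  have hS_lip := hT_lip.of_comp_eq_id (fun x _ => hleft x) (fun x _ => hright x) hS_le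
  have hπ : ∀ x : E, radialRetraction R x ∈ closedBall 0 R := fun x => by
    simp [norm_radialRetraction hR]
  refine ⟨S ∘ radialRetraction R, _, lipschitzOnWith_univ.mp <|
    hS_lip.comp (lipschitzWith_radialRetraction hR).lipschitzOnWith fun x _ => hπ x,
    fun x => hSR _ (by simpa using hπ x), fun x => (hS _).trans ?_,
    fun x hx => by simp [radialRetraction_of_norm_le hx]⟩
  gcongr
  simp [norm_radialRetraction hR]

/-- Under the hypotheses of the Hadamard-type theorem
(`‖F'(u)‖ ≤ M₁(R)`, `‖F''(u)‖ ≤ M₂(R)` on `{‖u‖ ≤ R}`, and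
`‖[F'(u)]⁻¹‖ ≤ a‖u‖ + b` everywhere, `a ≥ 0`, `b > 0`), `F` is injective. -/
theorem dsm_injectivity
    {H : Type*} [NormedAddCommGroup H] [InnerProductSpace ℝ H] [CompleteSpace H]
    (F : H → H) (F' : H → H →L[ℝ] H) (F'' : H → H →L[ℝ] H →L[ℝ] H)
    (Finv : H → H →L[ℝ] H)
    (hF' : ∀ u, HasFDerivAt F (F' u) u)
    (hF'' : ∀ u, HasFDerivAt F' (F'' u) u)
    (hM : ∀ R > (0:ℝ), ∃ M₁ M₂ : ℝ, ∀ u : H, ‖u‖ ≤ R → ‖F' u‖ ≤ M₁ ∧ ‖F'' u‖ ≤ M₂)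
    (a b : ℝ) (ha : 0 ≤ a) (hb : 0 < b)
    (hinv_left : ∀ u, (Finv u).comp (F' u) = ContinuousLinearMap.id ℝ H)
    (hinv_right : ∀ u, (F' u).comp (Finv u) = ContinuousLinearMap.id ℝ H)
    (hinv_bound : ∀ u : H, ‖Finv u‖ ≤ a * ‖u‖ + b) :
    Function.Injective F := by
  intro u₀ u₁ hF01
  set γ : ℝ → H := fun s => AffineMap.lineMap u₀ u₁ s
  set w : ℝ → H := fun s => F u₀ - F (γ s)
  have hγ : Continuous γ := AffineMap.lineMap_continuous
  have hw : Continuous w := continuous_const.sub <|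
    (continuous_iff_continuousAt.mpr fun x => (hF' x).continuousAt).comp hγ
  obtain ⟨Γ, hΓ⟩ := (isCompact_Icc (a := (0 : ℝ)) (b := 1)).exists_bound_of_continuousOn
    hγ.continuousOn
  obtain ⟨W, hW⟩ := (isCompact_Icc (a := (0 : ℝ)) (b := 1)).exists_bound_of_continuousOn
    hw.continuousOn
  -- `R` bounds all lifted paths (by Grönwall), so the truncated field `A` is `Finv` along them.
  set R := max 1 ((Γ + b * W) * exp (a * W))
  have hR : 0 < R := lt_max_of_lt_left one_pos
  obtain ⟨_, M₂, hM₂⟩ := hM R hR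
  obtain ⟨A, Λ, hA, hAR, hA_le, hA_eq⟩ := exists_lipschitzWith_eq_of_norm_le ha hR.le hF''
    (fun u hu => (hM₂ u hu).2) hinv_left hinv_right hinv_bound
  choose g hg0 hg using fun s => exists_forall_hasDerivWithinAt_Icc_of_lipschitzWith
    (hA.clm_apply_const (w s)) (L := (a * R + b) * ‖w s‖)
    (fun x => (A x).le_of_opNorm_le_of_le (hAR x) le_rfl) (γ s)
  have hg_le : ∀ s ∈ Icc (0 : ℝ) 1, ∀ t ∈ Icc (0 : ℝ) 1, ‖g s t‖ ≤ R := fun s hs t ht => by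
    refine (norm_le_of_forall_hasDerivWithinAt_clm_apply ha hb.le hA_le (hg s) ht).trans
      (le_max_of_le_right ?_)
    rw [hg0]
    exact mul_le_mul_of_nonneg (by gcongr; exacts [hΓ s hs, hW s hs])
      (by gcongr; exact hW s hs) (by positivity) (exp_pos _).le
  have hFg : ∀ s ∈ Icc (0 : ℝ) 1, F (g s 1) = F u₀ := fun s hs => by
    have := apply_one_eq_add_of_forall_hasDerivWithinAt_Icc hF' hinv_right fun t ht => by
      rw [← hA_eq _ (hg_le s hs t ht)]; exact hg s t ht
    simpa [hg0, w] using this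
  have hg_fix : ∀ s, w s = 0 → g s 1 = γ s := fun s hws => by
    have hg' := hg s
    simp only [hws, map_zero] at hg'
    simpa [hg0] using eq_add_of_forall_hasDerivWithinAt_Icc hg'
  have hg_cont : Continuous fun s => g s 1 :=
    continuous_apply_one_of_forall_hasDerivWithinAt_clm_apply hA hAR
      (by simpa only [hg0] using hγ) hw hg
  have := isPreconnected_Icc.constant_of_mapsTo
    (isDiscrete_preimage_singleton_of_comp_eq_id hF' (continuous_iff_continuousAt.mpr
      fun u => (hF'' u).continuousAt) hinv_left hinv_right (F u₀))
    hg_cont.continuousOn hFg (left_mem_Icc.mpr zero_le_one) (right_mem_Icc.mpr zero_le_one)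
  simpa [hg_fix 0 (by simp [w, γ]), hg_fix 1 (by simp [w, γ, hF01]), γ] using this
end

section
/- Let H be a real Hilbert space, F : H → H Fréchet differentiable with F′(u) boundedly invertible for every u, and let f ∈ H. If u : [0,T) → H is a differentiable solution of the DSM equation u̇(t) = −[F′(u(t))]⁻¹(F(u(t)) − f), then for all t ∈ [0,T) one has F(u(t)) − f = e^{−t}(F(u(0)) − f); in particular ‖F(u(t)) − f‖ = e^{−t}‖F(u(0)) − f‖. -/
open Set

/-! The residual `w(t) = F(u(t)) - f` satisfies the linear equation `ẇ = F'(u) u̇ = -w`, because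
`F'(u)` is undone by its right inverse. Hence `t ↦ eᵗ w(t)` has zero derivative on the interval,
so it is constant and `w(t) = e^{-t} w(0)`. -/

theorem HasDerivWithinAt.residual_of_rightInverse
    {𝕜 E G : Type*} [NontriviallyNormedField 𝕜]
    [NormedAddCommGroup E] [NormedSpace 𝕜 E] [NormedAddCommGroup G] [NormedSpace 𝕜 G]
    {F : E → G} {F' : E →L[𝕜] G} {Finv : G →L[𝕜] E} {u : 𝕜 → E} {s : Set 𝕜} {t : 𝕜} (f : G)
    (hF : HasFDerivAt F F' (u t)) (hinv : F'.comp Finv = ContinuousLinearMap.id 𝕜 G)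
    (hu : HasDerivWithinAt u (-Finv (F (u t) - f)) s t) :
    HasDerivWithinAt (fun r => F (u r) - f) (-(F (u t) - f)) s t := by
  have hright : F' (Finv (F (u t) - f)) = F (u t) - f := by
    simpa using congrArg (· (F (u t) - f)) hinv
  have hcomp := (hF.comp_hasDerivWithinAt t hu).sub_const f
  rwa [map_neg, hright] at hcomp

theorem Convex.eq_exp_neg_smul_of_hasDerivWithinAt_neg
    {E : Type*} [NormedAddCommGroup E] [NormedSpace ℝ E] {w : ℝ → E} {s : Set ℝ}
    (hs : Convex ℝ s) (hw : ∀ t ∈ s, HasDerivWithinAt w (-w t) s t)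
    {a t : ℝ} (ha : a ∈ s) (ht : t ∈ s) :
    w t = Real.exp (-(t - a)) • w a := by
  have hconst : ∀ r ∈ s, HasDerivWithinAt (fun r => Real.exp r • w r) 0 s r := by
    intro r hr
    have hprod := (Real.hasDerivAt_exp r).hasDerivWithinAt.smul (hw r hr)
    rwa [smul_neg, neg_add_cancel] at hprod
  have hsame : Real.exp t • w t = Real.exp a • w a := by
    have hbound := hs.norm_image_sub_le_of_norm_hasDerivWithin_le (C := 0) hconst
      (fun _ _ => by simp) ha ht
    simpa [sub_eq_zero] using hbound
  calc w t = Real.exp (-t) • (Real.exp t • w t) := by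
        rw [smul_smul, ← Real.exp_add, neg_add_cancel, Real.exp_zero, one_smul]
    _ = Real.exp (-(t - a)) • w a := by
        rw [hsame, smul_smul, ← Real.exp_add, neg_sub, sub_eq_neg_add]

theorem dsm_exponential_decay_general
    {H : Type*} [NormedAddCommGroup H] [InnerProductSpace ℝ H]
    (F : H → H) (F' : H → H →L[ℝ] H) (Finv : H → H →L[ℝ] H)
    (hF' : ∀ u, HasFDerivAt F (F' u) u)
    (hinv_right : ∀ u, (F' u).comp (Finv u) = ContinuousLinearMap.id ℝ H)
    (f : H) (T : ℝ) (u : ℝ → H)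
    (hu : ∀ t ∈ Ico (0:ℝ) T,
      HasDerivWithinAt u (-(Finv (u t) (F (u t) - f))) (Ico (0:ℝ) T) t) :
    ∀ t ∈ Ico (0:ℝ) T,
      F (u t) - f = Real.exp (-t) • (F (u 0) - f) ∧
      ‖F (u t) - f‖ = Real.exp (-t) * ‖F (u 0) - f‖ := by
  intro t ht
  have h0 : (0:ℝ) ∈ Ico (0:ℝ) T := ⟨le_rfl, ht.1.trans_lt ht.2⟩
  have hdecay : F (u t) - f = Real.exp (-t) • (F (u 0) - f) := by
    simpa using (convex_Ico 0 T).eq_exp_neg_smul_of_hasDerivWithinAt_neg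
      (fun r hr => (hu r hr).residual_of_rightInverse f (hF' (u r)) (hinv_right (u r))) h0 ht
  refine ⟨hdecay, ?_⟩
  rw [hdecay, norm_smul, Real.norm_of_nonneg (Real.exp_pos _).le]

/-- Along any solution of the DSM equation
`u̇ = -[F'(u)]⁻¹ (F(u) - f)` on `[0,T)` one has the exact decay
`F(u(t)) - f = e^{-t} (F(u(0)) - f)`, hence
`‖F(u(t)) - f‖ = e^{-t} ‖F(u(0)) - f‖`. -/
theorem dsm_exponential_decay
    {H : Type*} [NormedAddCommGroup H] [InnerProductSpace ℝ H] [CompleteSpace H]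
    (F : H → H) (F' : H → H →L[ℝ] H) (Finv : H → H →L[ℝ] H)
    (hF' : ∀ u, HasFDerivAt F (F' u) u)
    (hinv_left : ∀ u, (Finv u).comp (F' u) = ContinuousLinearMap.id ℝ H)
    (hinv_right : ∀ u, (F' u).comp (Finv u) = ContinuousLinearMap.id ℝ H)
    (f : H) (T : ℝ) (u : ℝ → H)
    (hu : ∀ t ∈ Ico (0:ℝ) T,
      HasDerivWithinAt u (-(Finv (u t) (F (u t) - f))) (Ico (0:ℝ) T) t) :
    ∀ t ∈ Ico (0:ℝ) T,
      F (u t) - f = Real.exp (-t) • (F (u 0) - f) ∧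
      ‖F (u t) - f‖ = Real.exp (-t) * ‖F (u 0) - f‖ :=
  dsm_exponential_decay_general F F' Finv hF' hinv_right f T u hu
end

section
/- Let H be a real Hilbert space, F : H → H Fréchet differentiable with F′(u) boundedly invertible for every u, f ∈ H, u₀ ∈ H, and R > 0. Suppose ‖[F′(u)]⁻¹‖ ≤ m(R) for all u in the closed ball B(u₀,R), and let u : [0,T) → H be a differentiable solution of u̇(t) = −[F′(u(t))]⁻¹(F(u(t)) − f), u(0) = u₀, such that u(t) ∈ B(u₀,R) for all t ∈ [0,T). Then ‖u̇(t)‖ ≤ m(R)‖F(u₀) − f‖ e^{−t} for all t ∈ [0,T). -/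
open Set Metric

/-!
Along the flow `u̇ = -[F'(u)]⁻¹(F(u) - f)` the chain rule gives `d/dt (F(u) - f) = F'(u) u̇ = -(F(u) - f)`,
so the residual decays exactly like `e^{-t}`: `F(u(t)) - f = e^{-t} (F(u₀) - f)`. Bounding `‖[F'(u(t))]⁻¹‖`
by `m(R)` inside the ball then bounds `‖u̇(t)‖ = ‖[F'(u(t))]⁻¹ (F(u(t)) - f)‖`.
-/

section

variable {E : Type*} [NormedAddCommGroup E] [NormedSpace ℝ E]

theorem HasDerivWithinAt.residual_of_newton_flow {F : E → E} {L Linv : E →L[ℝ] E} {f : E}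
    {u : ℝ → E} {s : Set ℝ} {t : ℝ} (hF : HasFDerivAt F L (u t))
    (hinv : L.comp Linv = ContinuousLinearMap.id ℝ E)
    (hu : HasDerivWithinAt u (-(Linv (F (u t) - f))) s t) :
    HasDerivWithinAt (fun r => F (u r) - f) (-(F (u t) - f)) s t := by
  have hL : L (Linv (F (u t) - f)) = F (u t) - f := DFunLike.congr_fun hinv _
  have h := (hF.comp_hasDerivWithinAt t hu).sub_const f
  rwa [map_neg, hL] at h

theorem Convex.eq_exp_neg_smul_of_hasDerivWithinAt_neg_s4 {g : ℝ → E} {s : Set ℝ}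
    (hs : Convex ℝ s) (hg : ∀ x ∈ s, HasDerivWithinAt g (-g x) s x) {a b : ℝ}
    (ha : a ∈ s) (hb : b ∈ s) : g b = Real.exp (-(b - a)) • g a := by
  have hconst_deriv : ∀ x ∈ s, HasDerivWithinAt (fun r => Real.exp r • g r) 0 s x := by
    intro x hx
    convert ((Real.hasDerivAt_exp x).hasDerivWithinAt (s := s)).smul (hg x hx) using 1
    · rfl
    · simp
  have hconst : Real.exp b • g b = Real.exp a • g a := by
    have := hs.norm_image_sub_le_of_norm_hasDerivWithin_le hconst_deriv (C := 0)
      (fun _ _ => by simp) ha hb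
    simpa [sub_eq_zero] using this
  rw [neg_sub, Real.exp_sub, div_eq_inv_mul, mul_smul, ← hconst, smul_smul,
    inv_mul_cancel₀ (Real.exp_ne_zero b), one_smul]

end

theorem dsm_velocity_bound_general
    {H : Type*} [NormedAddCommGroup H] [InnerProductSpace ℝ H]
    (F : H → H) (F' : H → H →L[ℝ] H) (Finv : H → H →L[ℝ] H)
    (hF' : ∀ u, HasFDerivAt F (F' u) u)
    (hinv_right : ∀ u, (F' u).comp (Finv u) = ContinuousLinearMap.id ℝ H)
    (f u₀ : H) (R : ℝ) (m : ℝ → ℝ)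
    (hm : ∀ u ∈ closedBall u₀ R, ‖Finv u‖ ≤ m R)
    (T : ℝ) (u u' : ℝ → H)
    (hu0 : u 0 = u₀)
    (hODE : ∀ t ∈ Ico (0:ℝ) T, u' t = -(Finv (u t) (F (u t) - f)))
    (hderiv : ∀ t ∈ Ico (0:ℝ) T, HasDerivWithinAt u (u' t) (Ico (0:ℝ) T) t)
    (hball : ∀ t ∈ Ico (0:ℝ) T, u t ∈ closedBall u₀ R) :
    ∀ t ∈ Ico (0:ℝ) T, ‖u' t‖ ≤ m R * ‖F u₀ - f‖ * Real.exp (-t) := by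
  intro t ht
  have h0 : (0:ℝ) ∈ Ico (0:ℝ) T := ⟨le_rfl, ht.1.trans_lt ht.2⟩
  have hresidual : F (u t) - f = Real.exp (-t) • (F u₀ - f) := by
    have hflow (s : ℝ) (hs : s ∈ Ico (0:ℝ) T) :=
      HasDerivWithinAt.residual_of_newton_flow (hF' (u s)) (hinv_right (u s))
        (hODE s hs ▸ hderiv s hs)
    simpa [hu0] using (convex_Ico 0 T).eq_exp_neg_smul_of_hasDerivWithinAt_neg_s4 hflow h0 ht
  rw [hODE t ht, norm_neg]
  calc ‖Finv (u t) (F (u t) - f)‖ ≤ ‖Finv (u t)‖ * ‖F (u t) - f‖ := (Finv (u t)).le_opNorm _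
    _ ≤ m R * ‖F (u t) - f‖ := by gcongr; exact hm _ (hball t ht)
    _ = m R * ‖F u₀ - f‖ * Real.exp (-t) := by
        rw [hresidual, norm_smul, Real.norm_of_nonneg (Real.exp_pos _).le]; ring

/-- If `‖[F'(u)]⁻¹‖ ≤ m(R)` on the closed ball `B(u₀,R)` and the
DSM solution `u(t)` stays in `B(u₀,R)` on `[0,T)`, then
`‖u̇(t)‖ ≤ m(R) ‖F(u₀) - f‖ e^{-t}` on `[0,T)`. -/
theorem dsm_velocity_bound
    {H : Type*} [NormedAddCommGroup H] [InnerProductSpace ℝ H] [CompleteSpace H]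
    (F : H → H) (F' : H → H →L[ℝ] H) (Finv : H → H →L[ℝ] H)
    (hF' : ∀ u, HasFDerivAt F (F' u) u)
    (hinv_left : ∀ u, (Finv u).comp (F' u) = ContinuousLinearMap.id ℝ H)
    (hinv_right : ∀ u, (F' u).comp (Finv u) = ContinuousLinearMap.id ℝ H)
    (f u₀ : H) (R : ℝ) (hR : 0 < R) (m : ℝ → ℝ)
    (hm : ∀ u ∈ closedBall u₀ R, ‖Finv u‖ ≤ m R)
    (T : ℝ) (u u' : ℝ → H)
    (hu0 : u 0 = u₀)
    (hODE : ∀ t ∈ Ico (0:ℝ) T, u' t = -(Finv (u t) (F (u t) - f)))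
    (hderiv : ∀ t ∈ Ico (0:ℝ) T, HasDerivWithinAt u (u' t) (Ico (0:ℝ) T) t)
    (hball : ∀ t ∈ Ico (0:ℝ) T, u t ∈ closedBall u₀ R) :
    ∀ t ∈ Ico (0:ℝ) T, ‖u' t‖ ≤ m R * ‖F u₀ - f‖ * Real.exp (-t) :=
  dsm_velocity_bound_general F F' Finv hF' hinv_right f u₀ R m hm T u u' hu0 hODE hderiv hball
end

section
/- Let H be a real Hilbert space, F : H → H twice Fréchet differentiable, u₀ ∈ H, f ∈ H, and R > 0. Suppose ‖F′(u)‖ ≤ M₁(R) and ‖F″(u)‖ ≤ M₂(R) on the closed ball B(u₀,R), that F′(u) is boundedly invertible with ‖[F′(u)]⁻¹‖ ≤ m(R) for all u ∈ B(u₀,R), and that m(R)·‖F(u₀) − f‖ ≤ R. Then the initial value problem u̇(t) = −[F′(u(t))]⁻¹(F(u(t)) − f), u(0) = u₀, has a unique solution u defined on all of [0,∞) with u(t) ∈ B(u₀,R) for all t ≥ 0; the limit u(∞) := lim_{t→∞} u(t) exists in H; F(u(∞)) = f; and ‖u(t) − u(∞)‖ ≤ m(R)‖F(u₀) − f‖ e^{−t}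 for all t ≥ 0. -/
/-!
Along a solution of `u̇ = -F'(u)⁻¹ (F u - f)` the residual obeys `d/dt (F u - f) = -(F u - f)`,
so `F (u t) - f = e^{-t} (F u₀ - f)`, and while `u` stays in the ball
`‖u̇ t‖ ≤ m(R) ‖F u₀ - f‖ e^{-t}`. Integrating, `‖u t - u s‖ ≤ m(R) ‖F u₀ - f‖ (e^{-s} - e^{-t})`;
with `s = 0` this is `< R`, so a solution can never reach the boundary of the ball. This gives
global existence (solve the equation for the field composed with a Lipschitz retraction onto the
ball, which is the true field as long as the solution stays inside), uniqueness (the field is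
Lipschitz on the ball), and the Cauchy estimate that yields `u(∞)` together with the rate.
-/

open Set Metric Filter Topology NNReal

section BallRetraction

variable {E : Type*} [NormedAddCommGroup E] [NormedSpace ℝ E] {R : ℝ}

theorem norm_radial_smul_sub_radial_smul_le (hR : 0 < R) (y z : E) :
    ‖(R / max R ‖y‖) • y - (R / max R ‖z‖) • z‖ ≤ 2 * ‖y - z‖ := by
  have hM : |max R ‖z‖ - max R ‖y‖| ≤ ‖y - z‖ := by
    rw [max_comm, max_comm R, norm_sub_rev]
    exact (abs_max_sub_max_le_abs _ _ R).trans (abs_norm_sub_norm_le z y)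
  set My := max R ‖y‖
  set Mz := max R ‖z‖
  have hMy : 0 < My := lt_max_of_lt_left hR
  have hMz : 0 < Mz := lt_max_of_lt_left hR
  have hscale : R / My ≤ 1 := (div_le_one hMy).2 (le_max_left _ _)
  have hz : ‖z‖ / Mz ≤ 1 := (div_le_one hMz).2 (le_max_right _ _)
  have h₁ : ‖(R / My) • (y - z)‖ ≤ ‖y - z‖ := by
    rw [norm_smul, Real.norm_of_nonneg (by positivity)]
    exact mul_le_of_le_one_left (norm_nonneg _) hscale
  have h₂ : ‖(R / My - R / Mz) • z‖ ≤ ‖y - z‖ :=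
    calc ‖(R / My - R / Mz) • z‖ = R / My * (|Mz - My| * (‖z‖ / Mz)) := by
          rw [show R / My - R / Mz = R / My * ((Mz - My) / Mz) by field_simp, norm_smul,
            Real.norm_eq_abs, abs_mul, abs_div, abs_div, abs_of_pos hR, abs_of_pos hMy,
            abs_of_pos hMz]
          ring
      _ ≤ 1 * (‖y - z‖ * 1) := by gcongr
      _ = ‖y - z‖ := by ring
  calc ‖(R / My) • y - (R / Mz) • z‖ = ‖(R / My) • (y - z) + (R / My - R / Mz) • z‖ := by
        rw [smul_sub, sub_smul]; abel_nf
    _ ≤ 2 * ‖y - z‖ := by linarith [norm_add_le ((R / My) • (y - z)) ((R / My - R / Mz) • z)]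

noncomputable def ballRetraction (c : E) (R : ℝ) (x : E) : E :=
  c + (R / max R ‖x - c‖) • (x - c)

theorem ballRetraction_of_mem (hR : 0 < R) {c x : E} (hx : x ∈ closedBall c R) :
    ballRetraction c R x = x := by
  rw [mem_closedBall, dist_eq_norm] at hx
  simp [ballRetraction, max_eq_left hx, div_self hR.ne']

theorem ballRetraction_mem_closedBall (hR : 0 < R) (c x : E) :
    ballRetraction c R x ∈ closedBall c R := by
  have hM : 0 < max R ‖x - c‖ := lt_max_of_lt_left hR
  rw [mem_closedBall, dist_eq_norm, ballRetraction, add_sub_cancel_left, norm_smul,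
    Real.norm_of_nonneg (by positivity), div_mul_eq_mul_div, div_le_iff₀ hM]
  exact mul_le_mul_of_nonneg_left (le_max_right _ _) hR.le

theorem lipschitzWith_ballRetraction (hR : 0 < R) (c : E) :
    LipschitzWith 2 (ballRetraction c R) := by
  refine LipschitzWith.of_dist_le_mul fun x y => ?_
  rw [dist_eq_norm, dist_eq_norm, ballRetraction, ballRetraction, add_sub_add_left_eq_sub,
    ← sub_sub_sub_cancel_right x y c, NNReal.coe_ofNat]
  exact norm_radial_smul_sub_radial_smul_le hR _ _

end BallRetraction

theorem LipschitzOnWith.clm_apply {X E G : Type*} [PseudoMetricSpace X] [NormedAddCommGroup E]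
    [NormedSpace ℝ E] [NormedAddCommGroup G] [NormedSpace ℝ G] {A : X → E →L[ℝ] G} {g : X → E}
    {s : Set X} {KA Kg : ℝ≥0} {a b : ℝ} (hA : LipschitzOnWith KA A s)
    (hg : LipschitzOnWith Kg g s) (hAa : ∀ x ∈ s, ‖A x‖ ≤ a) (hgb : ∀ x ∈ s, ‖g x‖ ≤ b) :
    LipschitzOnWith (KA * b + a * Kg).toNNReal (fun x => A x (g x)) s := by
  refine LipschitzOnWith.of_dist_le' fun x hx y hy => ?_
  have hA' := hA.dist_le_mul x hx y hy
  have hg' := hg.dist_le_mul x hx y hy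
  rw [dist_eq_norm] at hA' hg' ⊢
  calc ‖A x (g x) - A y (g y)‖ = ‖(A x - A y) (g x) + A y (g x - g y)‖ := by
        rw [sub_apply, map_sub]; abel_nf
    _ ≤ ‖A x - A y‖ * ‖g x‖ + ‖A y‖ * ‖g x - g y‖ :=
        (norm_add_le _ _).trans (add_le_add (ContinuousLinearMap.le_opNorm _ _)
          (ContinuousLinearMap.le_opNorm _ _))
    _ ≤ KA * dist x y * b + a * (Kg * dist x y) := by
        gcongr
        · exact hgb x hx
        · exact (norm_nonneg _).trans (hAa x hx)
        · exact hAa y hy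
    _ = (KA * b + a * Kg) * dist x y := by ring

theorem ContinuousLinearMap.norm_sub_le_of_comp_eq_id {E : Type*} [NormedAddCommGroup E]
    [NormedSpace ℝ E] {A A' B B' : E →L[ℝ] E} (hA : A'.comp A = .id ℝ E)
    (hB : B.comp B' = .id ℝ E) : ‖A' - B'‖ ≤ ‖A'‖ * ‖B - A‖ * ‖B'‖ := by
  rw [← mul_def, ← one_def] at hA hB
  have : A' - B' = A' * (B - A) * B' := by
    rw [mul_sub, sub_mul, mul_assoc, hB, hA, mul_one, one_mul]
  rw [this]
  exact (norm_mul_le _ _).trans (mul_le_mul_of_nonneg_right (norm_mul_le _ _) (norm_nonneg _))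

theorem norm_image_sub_le_of_norm_deriv_right_le_exp_neg {E : Type*} [NormedAddCommGroup E]
    [NormedSpace ℝ E] {g g' : ℝ → E} {a b c : ℝ} (hg : ContinuousOn g (Icc a b))
    (hg' : ∀ t ∈ Ico a b, HasDerivWithinAt g (g' t) (Ici t) t)
    (bound : ∀ t ∈ Ico a b, ‖g' t‖ ≤ c * Real.exp (-t)) :
    ∀ t ∈ Icc a b, ‖g t - g a‖ ≤ c * (Real.exp (-a) - Real.exp (-t)) := by
  have hB : ∀ t, HasDerivAt (fun t => c * (Real.exp (-a) - Real.exp (-t))) (c * Real.exp (-t)) t :=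
    fun t => by simpa using ((hasDerivAt_neg t).exp.const_sub (Real.exp (-a))).const_mul c
  refine image_norm_le_of_norm_deriv_right_le_deriv_boundary (hg.sub continuousOn_const)
    (fun t ht => (hg' t ht).sub_const (g a)) (by simp) hB bound

theorem IsOpen.mapsTo_Ici_of_mapsTo_Icc_closure {E : Type*} [TopologicalSpace E] {U : Set E}
    {v : ℝ → E} {a : ℝ} (hU : IsOpen U) (hv : ContinuousOn v (Ici a)) (ha : v a ∈ U)
    (h : ∀ b ≥ a, MapsTo v (Icc a b) (closure U) → v b ∈ U) : MapsTo v (Ici a) U := by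
  intro t₁ ht₁
  by_contra hvt₁
  -- the first time `T` at which `v` leaves `U`
  obtain ⟨T, hTZ, hTmin⟩ : ∃ T ∈ Icc a t₁ ∩ v ⁻¹' Uᶜ, ∀ t ∈ Icc a t₁ ∩ v ⁻¹' Uᶜ, T ≤ t := by
    have hZ : IsClosed (Icc a t₁ ∩ v ⁻¹' Uᶜ) :=
      (hv.mono Icc_subset_Ici_self).preimage_isClosed_of_isClosed isClosed_Icc hU.isClosed_compl
    have hbdd : BddBelow (Icc a t₁ ∩ v ⁻¹' Uᶜ) := ⟨a, fun t ht => ht.1.1⟩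
    exact ⟨_, hZ.csInf_mem ⟨t₁, ⟨ht₁, le_rfl⟩, hvt₁⟩ hbdd, fun t ht => csInf_le hbdd ht⟩
  have hbefore : MapsTo v (Ico a T) U := fun t ht => by
    by_contra hvt
    exact (hTmin t ⟨⟨ht.1, ht.2.le.trans hTZ.1.2⟩, hvt⟩).not_gt ht.2
  have haT : a ≠ T := by rintro rfl; exact hTZ.2 ha
  have hvT : v T ∈ closure U :=
    ((hv T hTZ.1.1).mono (Ico_subset_Icc_self.trans Icc_subset_Ici_self)).mem_closure
      (by rw [closure_Ico haT]; exact right_mem_Icc.2 hTZ.1.1) hbefore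
  refine hTZ.2 (h T hTZ.1.1 fun t ht => ?_)
  rcases ht.2.lt_or_eq with htT | rfl
  · exact subset_closure (hbefore ⟨ht.1, htT⟩)
  · exact hvT

theorem exists_tendsto_of_dist_le_sub {X : Type*} [PseudoMetricSpace X] [CompleteSpace X]
    {u : ℝ → X} {φ : ℝ → ℝ} {a : ℝ} (hφ : Tendsto φ atTop (𝓝 0))
    (hu : ∀ t s, a ≤ t → t ≤ s → dist (u s) (u t) ≤ φ t - φ s) :
    ∃ l, Tendsto u atTop (𝓝 l) ∧ ∀ t ≥ a, dist (u t) l ≤ φ t := by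
  have hcauchy : CauchySeq u := by
    refine Metric.cauchySeq_iff'.2 fun ε hε => ?_
    obtain ⟨N, hN⟩ := eventually_atTop.1
      ((hφ.eventually (Ioo_mem_nhds (neg_lt_zero.2 (half_pos hε)) (half_pos hε))).and
        (eventually_ge_atTop a))
    refine ⟨N, fun n hn => (hu N n (hN N le_rfl).2 hn).trans_lt ?_⟩
    linarith [(hN N le_rfl).1.2, (hN n hn).1.1]
  obtain ⟨l, hl⟩ := cauchySeq_tendsto_of_complete hcauchy
  refine ⟨l, hl, fun t ht => le_of_tendsto_of_tendsto (tendsto_const_nhds.dist hl)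
    (tendsto_const_nhds.sub hφ) ?_ |>.trans_eq (sub_zero _)⟩
  filter_upwards [eventually_ge_atTop t] with s hs
  rw [dist_comm]
  exact hu t s ht hs

section GlobalODE

variable {E : Type*} [NormedAddCommGroup E] [NormedSpace ℝ E] {G : E → E} {K : ℝ≥0}

theorem exists_forall_mem_Icc_hasDerivWithinAt_of_lipschitzWith [CompleteSpace E] {C : ℝ}
    (hG : LipschitzWith K G) (hC : ∀ x, ‖G x‖ ≤ C) (x₀ : E) (T : ℝ≥0) :
    ∃ α : ℝ → E, α 0 = x₀ ∧ ∀ t ∈ Icc (0 : ℝ) T, HasDerivWithinAt α (G (α t)) (Icc 0 T) t := by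
  have hpl : IsPicardLindelof (fun _ => G) (tmin := 0) (tmax := T) ⟨0, le_rfl, T.2⟩ x₀
      (C.toNNReal * T) 0 C.toNNReal K :=
    { lipschitzOnWith := fun _ _ => hG.lipschitzOnWith
      continuousOn := fun _ _ => continuousOn_const
      norm_le := fun _ _ x _ => (hC x).trans (Real.le_coe_toNNReal C)
      mul_max_le := by simp }
  exact hpl.exists_eq_forall_mem_Icc_hasDerivWithinAt₀

theorem exists_isIntegralCurveOn_Ici_of_lipschitzWith [CompleteSpace E] {C : ℝ}
    (hG : LipschitzWith K G) (hC : ∀ x, ‖G x‖ ≤ C) (x₀ : E) :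
    ∃ α : ℝ → E, α 0 = x₀ ∧ IsIntegralCurveOn α (fun _ => G) (Ici 0) := by
  choose seq hseq0 hseq using
    fun n : ℕ => exists_forall_mem_Icc_hasDerivWithinAt_of_lipschitzWith hG hC x₀ n
  have hright : ∀ n : ℕ, ∀ t ∈ Ico (0 : ℝ) n,
      HasDerivWithinAt (seq n) (G (seq n t)) (Ici t) t := fun n t ht =>
    (hseq n t (Ico_subset_Icc_self ht)).mono_of_mem_nhdsWithin (Icc_mem_nhdsGE_of_mem ht)
  have hagree : ∀ k n : ℕ, k ≤ n → EqOn (seq k) (seq n) (Icc 0 k) := fun k n hkn => by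
    have hkn' : (k : ℝ) ≤ n := Nat.cast_le.2 hkn
    refine ODE_solution_unique_of_mem_Icc_right (v := fun _ => G) (s := fun _ => univ)
      (fun _ _ => hG.lipschitzOnWith) (fun t ht => (hseq k t ht).continuousWithinAt)
      (hright k) (fun _ _ => mem_univ _)
      (fun t ht => ((hseq n t ⟨ht.1, ht.2.trans hkn'⟩).continuousWithinAt).mono
        (Icc_subset_Icc_right hkn'))
      (fun t ht => hright n t ⟨ht.1, ht.2.trans_le hkn'⟩) (fun _ _ => mem_univ _)
      (by rw [hseq0, hseq0])
  set α : ℝ → E := fun t => seq (⌊t⌋₊ + 1) t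
  have hα : ∀ n : ℕ, EqOn α (seq n) (Icc 0 n) := fun n t ht => by
    have htk : t ≤ (⌊t⌋₊ + 1 : ℕ) := by push_cast; exact (Nat.lt_floor_add_one t).le
    rcases le_total (⌊t⌋₊ + 1) n with h | h
    · exact hagree _ n h ⟨ht.1, htk⟩
    · exact (hagree n _ h ht).symm
  refine ⟨α, by simp [α, hseq0], fun t ht => ?_⟩
  have htn : t < (⌊t⌋₊ + 1 : ℕ) := by push_cast; exact Nat.lt_floor_add_one t
  have hmem : Icc 0 ((⌊t⌋₊ + 1 : ℕ) : ℝ) ∈ 𝓝[Ici 0] t :=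
    mem_nhdsWithin.2 ⟨Iio _, isOpen_Iio, htn, fun s hs => ⟨hs.2, hs.1.le⟩⟩
  exact ((hseq _ t ⟨ht, htn.le⟩).mono_of_mem_nhdsWithin hmem).congr_of_eventuallyEq
    (eventuallyEq_of_mem hmem (hα _)) rfl

theorem IsIntegralCurveOn.hasDerivWithinAt_Ici {γ : ℝ → E} {v : ℝ → E → E} {a t : ℝ}
    (hγ : IsIntegralCurveOn γ v (Ici a)) (ht : a ≤ t) :
    HasDerivWithinAt γ (v t (γ t)) (Ici t) t :=
  (hγ t ht).mono (Ici_subset_Ici.2 ht)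

theorem IsIntegralCurveOn.eqOn_Ici {γ γ' : ℝ → E} {s : Set E} {a : ℝ}
    (hG : LipschitzOnWith K G s) (hγ : IsIntegralCurveOn γ (fun _ => G) (Ici a))
    (hγ' : IsIntegralCurveOn γ' (fun _ => G) (Ici a)) (hγs : MapsTo γ (Ici a) s)
    (hγ's : MapsTo γ' (Ici a) s) (ha : γ a = γ' a) : EqOn γ γ' (Ici a) := fun _ ht =>
  ODE_solution_unique_of_mem_Icc_right (v := fun _ => G) (s := fun _ => s) (fun _ _ => hG)
    (hγ.continuousOn.mono Icc_subset_Ici_self)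
    (fun _ hτ => hγ.hasDerivWithinAt_Ici hτ.1) (fun _ hτ => hγs hτ.1)
    (hγ'.continuousOn.mono Icc_subset_Ici_self)
    (fun _ hτ => hγ'.hasDerivWithinAt_Ici hτ.1) (fun _ hτ => hγ's hτ.1) ha
    ⟨ht, le_rfl⟩

end GlobalODE

section DSM

variable {H : Type*} [NormedAddCommGroup H] [NormedSpace ℝ H] {F : H → H}
  {F' : H → H →L[ℝ] H} {Finv : H → H →L[ℝ] H} {u₀ f : H} {R m : ℝ} {v : ℝ → H}

noncomputable def dsmField (F : H → H) (Finv : H → H →L[ℝ] H) (f x : H) : H :=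
  -(Finv x (F x - f))

theorem norm_image_sub_le_add_of_mem_closedBall {M : ℝ} (hF' : ∀ u, HasFDerivAt F (F' u) u)
    (hM : ∀ u ∈ closedBall u₀ R, ‖F' u‖ ≤ M) {x : H} (hx : x ∈ closedBall u₀ R) :
    ‖F x - f‖ ≤ M * R + ‖F u₀ - f‖ := by
  have hR : 0 ≤ R := nonneg_of_mem_closedBall hx
  have hM₀ : 0 ≤ M := (norm_nonneg _).trans (hM u₀ (mem_closedBall_self hR))
  have hFx : ‖F x - F u₀‖ ≤ M * ‖x - u₀‖ :=
    (convex_closedBall u₀ R).norm_image_sub_le_of_norm_hasFDerivWithin_le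
      (fun z _ => (hF' z).hasFDerivWithinAt) hM (mem_closedBall_self hR) hx
  calc ‖F x - f‖ = ‖(F x - F u₀) + (F u₀ - f)‖ := by rw [sub_add_sub_cancel]
    _ ≤ M * ‖x - u₀‖ + ‖F u₀ - f‖ := (norm_add_le _ _).trans (by gcongr)
    _ ≤ M * R + ‖F u₀ - f‖ := by
        gcongr; rwa [mem_closedBall, dist_eq_norm] at hx

theorem exists_norm_dsmField_le {M₁ : ℝ} (hF' : ∀ u, HasFDerivAt F (F' u) u)
    (hM₁ : ∀ u ∈ closedBall u₀ R, ‖F' u‖ ≤ M₁) (hm : ∀ u ∈ closedBall u₀ R, ‖Finv u‖ ≤ m) :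
    ∃ C, ∀ x ∈ closedBall u₀ R, ‖dsmField F Finv f x‖ ≤ C := by
  refine ⟨m * (M₁ * R + ‖F u₀ - f‖), fun x hx => ?_⟩
  rw [dsmField, norm_neg]
  exact (ContinuousLinearMap.le_opNorm _ _).trans (mul_le_mul (hm x hx)
    (norm_image_sub_le_add_of_mem_closedBall hF' hM₁ hx) (norm_nonneg _)
    ((norm_nonneg _).trans (hm x hx)))

theorem exists_lipschitzOnWith_dsmField {F'' : H → H →L[ℝ] H →L[ℝ] H} {M₁ M₂ : ℝ}
    (hF' : ∀ u, HasFDerivAt F (F' u) u) (hF'' : ∀ u, HasFDerivAt F' (F'' u) u)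
    (hM₁ : ∀ u ∈ closedBall u₀ R, ‖F' u‖ ≤ M₁) (hM₂ : ∀ u ∈ closedBall u₀ R, ‖F'' u‖ ≤ M₂)
    (hinv_left : ∀ u, (Finv u).comp (F' u) = ContinuousLinearMap.id ℝ H)
    (hinv_right : ∀ u, (F' u).comp (Finv u) = ContinuousLinearMap.id ℝ H)
    (hm : ∀ u ∈ closedBall u₀ R, ‖Finv u‖ ≤ m) :
    ∃ K, LipschitzOnWith K (dsmField F Finv f) (closedBall u₀ R) := by
  have hball : Convex ℝ (closedBall u₀ R) := convex_closedBall u₀ R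
  have hFinv : LipschitzOnWith (m * M₂ * m).toNNReal Finv (closedBall u₀ R) := by
    refine LipschitzOnWith.of_dist_le' fun x hx y hy => ?_
    have hF'xy : ‖F' y - F' x‖ ≤ M₂ * ‖y - x‖ :=
      hball.norm_image_sub_le_of_norm_hasFDerivWithin_le
        (fun z _ => (hF'' z).hasFDerivWithinAt) hM₂ hx hy
    have hm₀ : 0 ≤ m := (norm_nonneg _).trans (hm x hx)
    have hM₂₀ : 0 ≤ M₂ := (norm_nonneg (F'' x)).trans (hM₂ x hx)
    calc dist (Finv x) (Finv y) ≤ ‖Finv x‖ * ‖F' y - F' x‖ * ‖Finv y‖ := by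
          rw [dist_eq_norm]
          exact ContinuousLinearMap.norm_sub_le_of_comp_eq_id (hinv_left x) (hinv_right y)
      _ ≤ m * (M₂ * ‖y - x‖) * m := by gcongr <;> first | exact hm x hx | exact hm y hy
      _ = m * M₂ * m * dist x y := by rw [dist_eq_norm', mul_assoc m]; ring
  have hres : LipschitzOnWith M₁.toNNReal (fun x => F x - f) (closedBall u₀ R) := by
    refine LipschitzOnWith.of_dist_le' fun x hx y hy => ?_
    rw [dist_sub_right, dist_eq_norm, dist_eq_norm]
    exact hball.norm_image_sub_le_of_norm_hasFDerivWithin_le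
      (fun z _ => (hF' z).hasFDerivWithinAt) hM₁ hy hx
  have := hFinv.clm_apply hres hm fun x hx => norm_image_sub_le_add_of_mem_closedBall hF' hM₁ hx
  exact ⟨_, LipschitzOnWith.of_dist_le_mul fun x hx y hy => by
    rw [dsmField, dsmField, dist_neg_neg]; exact this.dist_le_mul x hx y hy⟩

theorem dsm_residual_eq (hF' : ∀ u, HasFDerivAt F (F' u) u)
    (hinv_right : ∀ u, (F' u).comp (Finv u) = ContinuousLinearMap.id ℝ H)
    {b : ℝ} (hv : ContinuousOn v (Icc 0 b))
    (hv' : ∀ t ∈ Ico 0 b, HasDerivWithinAt v (dsmField F Finv f (v t)) (Ici t) t) :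
    ∀ t ∈ Icc 0 b, F (v t) - f = Real.exp (-t) • (F (v 0) - f) := by
  have hFv : ContinuousOn (fun t => Real.exp t • (F (v t) - f)) (Icc 0 b) :=
    Real.continuous_exp.continuousOn.smul
      ((continuous_iff_continuousAt.2 fun u => (hF' u).continuousAt).comp_continuousOn hv
        |>.sub continuousOn_const)
  -- `F'(v) v̇ = -(F(v) - f)`, so `eᵗ (F(v(t)) - f)` is constant
  have hderiv : ∀ t ∈ Ico 0 b,
      HasDerivWithinAt (fun t => Real.exp t • (F (v t) - f)) 0 (Ici t) t := by
    intro t ht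
    have hF'v : F' (v t) (dsmField F Finv f (v t)) = -(F (v t) - f) := by
      rw [dsmField, map_neg, ← ContinuousLinearMap.comp_apply, hinv_right,
        ContinuousLinearMap.id_apply]
    have := (Real.hasDerivAt_exp t).hasDerivWithinAt.smul
      (((hF' (v t)).comp_hasDerivWithinAt t (hv' t ht)).sub_const f)
    rw [hF'v, smul_neg] at this
    exact this.congr_deriv (neg_add_cancel _)
  intro t ht
  have := constant_of_has_deriv_right_zero hFv hderiv t ht
  rw [Real.exp_zero, one_smul] at this
  rw [← this, smul_smul, ← Real.exp_add, neg_add_cancel, Real.exp_zero, one_smul]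

theorem dsm_norm_sub_le (hF' : ∀ u, HasFDerivAt F (F' u) u)
    (hinv_right : ∀ u, (F' u).comp (Finv u) = ContinuousLinearMap.id ℝ H)
    (hm : ∀ u ∈ closedBall u₀ R, ‖Finv u‖ ≤ m) (hv0 : v 0 = u₀)
    {b : ℝ} (hv : ContinuousOn v (Icc 0 b))
    (hv' : ∀ t ∈ Ico 0 b, HasDerivWithinAt v (dsmField F Finv f (v t)) (Ici t) t)
    (hball : MapsTo v (Icc 0 b) (closedBall u₀ R)) {s t : ℝ} (hs : 0 ≤ s) (hst : s ≤ t)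
    (htb : t ≤ b) :
    ‖v t - v s‖ ≤ m * ‖F u₀ - f‖ * (Real.exp (-s) - Real.exp (-t)) := by
  have hsub : Icc s b ⊆ Icc 0 b := Icc_subset_Icc_left hs
  refine norm_image_sub_le_of_norm_deriv_right_le_exp_neg (hv.mono hsub)
    (fun τ hτ => hv' τ ⟨hs.trans hτ.1, hτ.2⟩) (fun τ hτ => ?_) t ⟨hst, htb⟩
  have hτ : τ ∈ Icc 0 b := ⟨hs.trans hτ.1, hτ.2.le⟩
  rw [dsmField, norm_neg, mul_assoc]
  refine (ContinuousLinearMap.le_opNorm _ _).trans (mul_le_mul (hm _ (hball hτ)) ?_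
    (norm_nonneg _) ((norm_nonneg _).trans (hm _ (hball hτ))))
  rw [dsm_residual_eq hF' hinv_right hv hv' τ hτ, hv0, norm_smul, Real.norm_of_nonneg
    (Real.exp_pos _).le, mul_comm]

theorem dsm_mapsTo_ball (hF' : ∀ u, HasFDerivAt F (F' u) u)
    (hinv_right : ∀ u, (F' u).comp (Finv u) = ContinuousLinearMap.id ℝ H)
    (hR : 0 < R) (hm : ∀ u ∈ closedBall u₀ R, ‖Finv u‖ ≤ m) (hsmall : m * ‖F u₀ - f‖ ≤ R)
    (hv0 : v 0 = u₀) (hv : ContinuousOn v (Ici 0))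
    (hv' : ∀ t ≥ 0, v t ∈ closedBall u₀ R →
      HasDerivWithinAt v (dsmField F Finv f (v t)) (Ici t) t) :
    MapsTo v (Ici 0) (ball u₀ R) := by
  refine isOpen_ball.mapsTo_Ici_of_mapsTo_Icc_closure hv (by rw [hv0]; exact mem_ball_self hR)
    fun b hb hball => ?_
  rw [closure_ball u₀ hR.ne'] at hball
  have hdisp := dsm_norm_sub_le hF' hinv_right hm hv0 (hv.mono Icc_subset_Ici_self)
    (fun t ht => hv' t ht.1 (hball (Ico_subset_Icc_self ht))) hball le_rfl hb le_rfl
  rw [hv0, neg_zero, Real.exp_zero] at hdisp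
  have hexp : 0 < Real.exp (-b) := Real.exp_pos _
  have hexp₁ : Real.exp (-b) ≤ 1 := Real.exp_le_one_iff.2 (neg_nonpos.2 hb)
  rw [mem_ball, dist_eq_norm]
  nlinarith

theorem dsm_dist_le (hF' : ∀ u, HasFDerivAt F (F' u) u)
    (hinv_right : ∀ u, (F' u).comp (Finv u) = ContinuousLinearMap.id ℝ H)
    (hm : ∀ u ∈ closedBall u₀ R, ‖Finv u‖ ≤ m) (hv0 : v 0 = u₀)
    (hv : IsIntegralCurveOn v (fun _ => dsmField F Finv f) (Ici 0))
    (hball : MapsTo v (Ici 0) (closedBall u₀ R)) {s t : ℝ} (hs : 0 ≤ s) (hst : s ≤ t) :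
    dist (v t) (v s) ≤ m * ‖F u₀ - f‖ * Real.exp (-s) - m * ‖F u₀ - f‖ * Real.exp (-t) := by
  rw [dist_eq_norm, ← mul_sub]
  exact dsm_norm_sub_le hF' hinv_right hm hv0 (hv.continuousOn.mono Icc_subset_Ici_self)
    (fun _ hτ => hv.hasDerivWithinAt_Ici hτ.1) (fun _ hτ => hball hτ.1) hs hst le_rfl

theorem dsm_apply_eq_of_tendsto (hF' : ∀ u, HasFDerivAt F (F' u) u)
    (hinv_right : ∀ u, (F' u).comp (Finv u) = ContinuousLinearMap.id ℝ H)
    (hv : IsIntegralCurveOn v (fun _ => dsmField F Finv f) (Ici 0)) {l : H}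
    (hl : Tendsto v atTop (𝓝 l)) : F l = f := by
  have hres : Tendsto (fun t => f + Real.exp (-t) • (F (v 0) - f)) atTop (𝓝 f) := by
    simpa using tendsto_const_nhds.add
      (Real.tendsto_exp_neg_atTop_nhds_zero.smul_const (F (v 0) - f))
  refine tendsto_nhds_unique ((hF' l).continuousAt.tendsto.comp hl) (hres.congr' ?_)
  filter_upwards [eventually_ge_atTop 0] with t ht
  rw [← dsm_residual_eq hF' hinv_right (hv.continuousOn.mono Icc_subset_Ici_self)
    (fun _ hτ => hv.hasDerivWithinAt_Ici hτ.1) t ⟨ht, le_rfl⟩, add_sub_cancel]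
  rfl

end DSM

/-- Under bounds `M₁(R)`, `M₂(R)`, `m(R)` on the ball `B(u₀,R)` and
the condition `m(R)·‖F(u₀) - f‖ ≤ R`, the DSM problem
`u̇ = -[F'(u)]⁻¹(F(u) - f)`, `u(0) = u₀` has a unique global solution staying in
`B(u₀,R)`; `u(∞) = lim_{t→∞} u(t)` exists, `F(u(∞)) = f`, and
`‖u(t) - u(∞)‖ ≤ m(R)‖F(u₀) - f‖ e^{-t}`. -/
theorem dsm_global_convergence
    {H : Type*} [NormedAddCommGroup H] [InnerProductSpace ℝ H] [CompleteSpace H]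
    (F : H → H) (F' : H → H →L[ℝ] H) (F'' : H → H →L[ℝ] H →L[ℝ] H)
    (Finv : H → H →L[ℝ] H)
    (hF' : ∀ u, HasFDerivAt F (F' u) u)
    (hF'' : ∀ u, HasFDerivAt F' (F'' u) u)
    (u₀ f : H) (R : ℝ) (hR : 0 < R) (M₁ M₂ m : ℝ → ℝ)
    (hM₁ : ∀ u ∈ closedBall u₀ R, ‖F' u‖ ≤ M₁ R)
    (hM₂ : ∀ u ∈ closedBall u₀ R, ‖F'' u‖ ≤ M₂ R)
    (hinv_left : ∀ u, (Finv u).comp (F' u) = ContinuousLinearMap.id ℝ H)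
    (hinv_right : ∀ u, (F' u).comp (Finv u) = ContinuousLinearMap.id ℝ H)
    (hm : ∀ u ∈ closedBall u₀ R, ‖Finv u‖ ≤ m R)
    (hsmall : m R * ‖F u₀ - f‖ ≤ R) :
    ∃ u : ℝ → H,
      u 0 = u₀ ∧
      (∀ t ∈ Ici (0:ℝ),
        HasDerivWithinAt u (-(Finv (u t) (F (u t) - f))) (Ici (0:ℝ)) t) ∧
      (∀ t ∈ Ici (0:ℝ), u t ∈ closedBall u₀ R) ∧
      (∀ v : ℝ → H, v 0 = u₀ →
        (∀ t ∈ Ici (0:ℝ),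
          HasDerivWithinAt v (-(Finv (v t) (F (v t) - f))) (Ici (0:ℝ)) t) →
        ∀ t ∈ Ici (0:ℝ), v t = u t) ∧
      (∃ uinf : H, Tendsto u atTop (nhds uinf) ∧ F uinf = f ∧
        ∀ t ∈ Ici (0:ℝ), ‖u t - uinf‖ ≤ m R * ‖F u₀ - f‖ * Real.exp (-t)) := by
  obtain ⟨K, hK⟩ := exists_lipschitzOnWith_dsmField (f := f) hF' hF'' hM₁ hM₂ hinv_left
    hinv_right hm
  obtain ⟨C, hC⟩ := exists_norm_dsmField_le (f := f) hF' hM₁ hm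
  have hGr : ∀ x ∈ closedBall u₀ R,
      dsmField F Finv f (ballRetraction u₀ R x) = dsmField F Finv f x := fun x hx => by
    rw [ballRetraction_of_mem hR hx]
  obtain ⟨u, hu0, hu⟩ := exists_isIntegralCurveOn_Ici_of_lipschitzWith
    (lipschitzOnWith_univ.1 (hK.comp (lipschitzWith_ballRetraction hR u₀).lipschitzOnWith
      fun x _ => ballRetraction_mem_closedBall hR u₀ x))
    (fun x => hC _ (ballRetraction_mem_closedBall hR u₀ x)) u₀
  have hu_ball : MapsTo u (Ici 0) (closedBall u₀ R) := fun t ht =>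
    ball_subset_closedBall <| dsm_mapsTo_ball hF' hinv_right hR hm hsmall hu0 hu.continuousOn
      (fun s hs hus => by simpa only [Function.comp_apply, hGr _ hus] using
        hu.hasDerivWithinAt_Ici hs) ht
  have hu_sol : IsIntegralCurveOn u (fun _ => dsmField F Finv f) (Ici 0) := fun t ht => by
    simpa only [Function.comp_apply, hGr _ (hu_ball ht)] using hu t ht
  obtain ⟨uinf, hlim, hrate⟩ := exists_tendsto_of_dist_le_sub
    (by simpa using Real.tendsto_exp_neg_atTop_nhds_zero.const_mul (m R * ‖F u₀ - f‖))
    fun t s ht hts => dsm_dist_le hF' hinv_right hm hu0 hu_sol hu_ball ht hts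
  refine ⟨u, hu0, hu_sol, hu_ball, fun v hv0 hv => ?_, uinf, hlim,
    dsm_apply_eq_of_tendsto hF' hinv_right hu_sol hlim,
    fun t ht => dist_eq_norm (u t) uinf ▸ hrate t ht⟩
  have hv : IsIntegralCurveOn v (fun _ => dsmField F Finv f) (Ici 0) := hv
  have hv_ball : MapsTo v (Ici 0) (closedBall u₀ R) := fun t ht =>
    ball_subset_closedBall <| dsm_mapsTo_ball hF' hinv_right hR hm hsmall hv0 hv.continuousOn
      (fun _ ht _ => hv.hasDerivWithinAt_Ici ht) ht
  exact hv.eqOn_Ici hK hu_sol hv_ball hu_ball (hv0.trans hu0.symm)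
end

section
/- Let H be a real Hilbert space, F : H → H Fréchet differentiable with F′(u) boundedly invertible for every u, and suppose there exist constants a > 0 and b > 0 such that ‖[F′(u)]⁻¹‖ ≤ a‖u‖ + b for all u ∈ H. Let f ∈ H and let u : [0,∞) → H be a differentiable solution of u̇(t) = −[F′(u(t))]⁻¹(F(u(t)) − f), u(0) = u₀, and set g₀ := ‖F(u₀) − f‖ and p := b/a. Then sup_{t ≥ 0} ‖u(t)‖ ≤ (‖u₀‖ + p)e^{a g₀} − p, and consequently ‖u̇(t)‖ ≤ (a c₁ + b) g₀ e^{−t} for all t ≥ 0, where c₁ := (‖u₀‖ + p)e^{a g₀} − p. -/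
/-!
Along a DSM trajectory the residual `F (u t) - f` solves `ṙ = -r`, so it equals
`exp (-t) • (F u₀ - f)`. Hence `‖u̇ t‖ ≤ (a ‖u t‖ + b) g₀ exp (-t)`. The time change
`s = 1 - exp (-t)` absorbs the factor `exp (-t)`: `w s = u (-log (1 - s))` satisfies the
constant-coefficient Gronwall inequality `‖ẇ‖ ≤ a g₀ ‖w‖ + b g₀` on `[0, 1)`, and its Gronwall
bound at `s ≤ 1` is at most `c₁`.
-/

open Set Real

theorem eq_exp_neg_smul_of_hasDerivWithinAt_neg {E : Type*} [NormedAddCommGroup E]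
    [NormedSpace ℝ E] {r : ℝ → E}
    (hr : ∀ t ∈ Ici (0 : ℝ), HasDerivWithinAt r (-r t) (Ici 0) t) :
    ∀ t ∈ Ici (0 : ℝ), r t = exp (-t) • r 0 := by
  have hconst : ∀ t ∈ Ici (0 : ℝ), HasDerivWithinAt (fun s => exp s • r s) 0 (Ici 0) t :=
    fun t ht => ((hasDerivAt_exp t).hasDerivWithinAt.smul (hr t ht)).congr_deriv (by
      rw [smul_neg, neg_add_cancel])
  intro T hT
  have hT' : exp T • r T = r 0 := by
    simpa using constant_of_has_deriv_right_zero
      (fun t ht => (hconst t ht.1).continuousWithinAt.mono Icc_subset_Ici_self)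
      (fun t ht => (hconst t ht.1).mono (Ici_subset_Ici.2 ht.1)) T ⟨hT, le_rfl⟩
  rw [← hT', smul_smul, ← exp_add, neg_add_cancel, exp_zero, one_smul]

theorem sub_eq_exp_neg_smul_of_hasDerivWithinAt_comp {E G : Type*} [NormedAddCommGroup E]
    [NormedSpace ℝ E] [NormedAddCommGroup G] [NormedSpace ℝ G] {F : E → G} {F' : E → E →L[ℝ] G}
    {u u' : ℝ → E} {f : G} (hF' : ∀ x, HasFDerivAt F (F' x) x)
    (hu : ∀ t ∈ Ici (0 : ℝ), HasDerivWithinAt u (u' t) (Ici 0) t)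
    (hflow : ∀ t ∈ Ici (0 : ℝ), F' (u t) (u' t) = -(F (u t) - f)) :
    ∀ t ∈ Ici (0 : ℝ), F (u t) - f = exp (-t) • (F (u 0) - f) :=
  eq_exp_neg_smul_of_hasDerivWithinAt_neg fun t ht =>
    hflow t ht ▸ ((hF' (u t)).comp_hasDerivWithinAt t (hu t ht)).sub_const f

theorem mapsTo_neg_log_one_sub_Ico : MapsTo (fun s : ℝ => -log (1 - s)) (Ico 0 1) (Ici 0) :=
  fun _ hs => neg_nonneg.2 (log_nonpos (by linarith [hs.2]) (by linarith [hs.1]))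

section TimeChange

variable {E : Type*} [NormedAddCommGroup E] [NormedSpace ℝ E] {v v' : ℝ → E}

theorem hasDerivWithinAt_comp_neg_log_one_sub
    (hv : ∀ t ∈ Ici (0 : ℝ), HasDerivWithinAt v (v' t) (Ici 0) t) {s : ℝ}
    (hs : s ∈ Ico (0 : ℝ) 1) :
    HasDerivWithinAt (fun s => v (-log (1 - s))) ((1 - s)⁻¹ • v' (-log (1 - s))) (Ico 0 1) s := by
  have hlog : HasDerivAt (fun s : ℝ => -log (1 - s)) (1 - s)⁻¹ s :=
    (((hasDerivAt_id' s).const_sub 1).log (by linarith [hs.2])).neg.congr_deriv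
      (by rw [neg_div, neg_neg, one_div])
  exact (hv _ (mapsTo_neg_log_one_sub_Ico hs)).scomp s hlog.hasDerivWithinAt
    mapsTo_neg_log_one_sub_Ico

theorem norm_le_gronwallBound_one_sub_exp_neg {K ε : ℝ}
    (hv : ∀ t ∈ Ici (0 : ℝ), HasDerivWithinAt v (v' t) (Ici 0) t)
    (bound : ∀ t ∈ Ici (0 : ℝ), ‖v' t‖ ≤ (K * ‖v t‖ + ε) * exp (-t)) :
    ∀ t ∈ Ici (0 : ℝ), ‖v t‖ ≤ gronwallBound ‖v 0‖ K ε (1 - exp (-t)) := by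
  intro T hT
  have hw := fun s (hs : s ∈ Ico (0 : ℝ) 1) => hasDerivWithinAt_comp_neg_log_one_sub hv hs
  have hwbound : ∀ s ∈ Ico (0 : ℝ) 1,
      ‖(1 - s)⁻¹ • v' (-log (1 - s))‖ ≤ K * ‖v (-log (1 - s))‖ + ε := by
    intro s hs
    have h1s : 0 < 1 - s := by linarith [hs.2]
    have hbound := bound _ (mapsTo_neg_log_one_sub_Ico hs)
    rw [neg_neg, exp_log h1s] at hbound
    rwa [norm_smul, norm_inv, norm_of_nonneg h1s.le, inv_mul_le_iff₀ h1s, mul_comm (1 - s)]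
  have hs₀ : 1 - exp (-T) ∈ Ico (0 : ℝ) 1 :=
    ⟨by linarith [exp_le_one_iff.2 (neg_nonpos.2 hT)], by linarith [exp_pos (-T)]⟩
  have hsub : Icc 0 (1 - exp (-T)) ⊆ Ico (0 : ℝ) 1 := Icc_subset_Ico_right hs₀.2
  have hG := norm_le_gronwallBound_of_norm_deriv_right_le (δ := ‖v 0‖)
    (fun s hs => (hw s (hsub hs)).continuousWithinAt.mono hsub)
    (fun s hs => (hw s (hsub (Ico_subset_Icc_self hs))).mono_of_mem_nhdsWithin
      (Ico_mem_nhdsGE_of_mem (hsub (Ico_subset_Icc_self hs))))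
    (by simp) (fun s hs => hwbound s (hsub (Ico_subset_Icc_self hs)))
    _ ⟨hs₀.1, le_rfl⟩
  simpa using hG

end TimeChange

theorem gronwallBound_mul_mul {a : ℝ} (ha : a ≠ 0) (δ b g x : ℝ) :
    gronwallBound δ (a * g) (b * g) x = (δ + b / a) * exp (a * g * x) - b / a := by
  rcases eq_or_ne g 0 with rfl | hg
  · simp [gronwallBound_K0]
  · rw [gronwallBound_of_K_ne_0 (mul_ne_zero ha hg)]
    field_simp
    ring

theorem dsm_trajectory_bound_general
    {H : Type*} [NormedAddCommGroup H] [InnerProductSpace ℝ H]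
    (F : H → H) (F' : H → H →L[ℝ] H) (Finv : H → H →L[ℝ] H)
    (hF' : ∀ u, HasFDerivAt F (F' u) u)
    (hinv_right : ∀ u, (F' u).comp (Finv u) = ContinuousLinearMap.id ℝ H)
    (a b : ℝ) (ha : 0 < a) (hb : 0 < b)
    (hinv_bound : ∀ u : H, ‖Finv u‖ ≤ a * ‖u‖ + b)
    (f u₀ : H) (u u' : ℝ → H)
    (hu0 : u 0 = u₀)
    (hODE : ∀ t ∈ Ici (0:ℝ), u' t = -(Finv (u t) (F (u t) - f)))
    (hderiv : ∀ t ∈ Ici (0:ℝ), HasDerivWithinAt u (u' t) (Ici (0:ℝ)) t) :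
    (∀ t ∈ Ici (0:ℝ),
      ‖u t‖ ≤ (‖u₀‖ + b / a) * Real.exp (a * ‖F u₀ - f‖) - b / a) ∧
    (∀ t ∈ Ici (0:ℝ),
      ‖u' t‖ ≤ (a * ((‖u₀‖ + b / a) * Real.exp (a * ‖F u₀ - f‖) - b / a) + b) *
        ‖F u₀ - f‖ * Real.exp (-t)) := by
  set g₀ := ‖F u₀ - f‖
  have hresidual : ∀ t ∈ Ici (0 : ℝ), F (u t) - f = exp (-t) • (F u₀ - f) := by
    refine hu0 ▸ sub_eq_exp_neg_smul_of_hasDerivWithinAt_comp hF' hderiv fun t ht => ?_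
    rw [hODE t ht, map_neg, ← ContinuousLinearMap.comp_apply, hinv_right,
      ContinuousLinearMap.id_apply]
  have hspeed : ∀ t ∈ Ici (0 : ℝ), ‖u' t‖ ≤ (a * ‖u t‖ + b) * g₀ * exp (-t) := by
    intro t ht
    calc ‖u' t‖ ≤ ‖Finv (u t)‖ * ‖F (u t) - f‖ := by
          rw [hODE t ht, norm_neg]; exact (Finv (u t)).le_opNorm _
      _ ≤ (a * ‖u t‖ + b) * (exp (-t) * g₀) := by
          rw [hresidual t ht, norm_smul, norm_of_nonneg (exp_pos _).le]
          gcongr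
          exact hinv_bound _
      _ = (a * ‖u t‖ + b) * g₀ * exp (-t) := by ring
  have hnorm : ∀ t ∈ Ici (0 : ℝ), ‖u t‖ ≤ (‖u₀‖ + b / a) * exp (a * g₀) - b / a := by
    intro t ht
    have hs : a * g₀ * (1 - exp (-t)) ≤ a * g₀ :=
      mul_le_of_le_one_right (mul_nonneg ha.le (norm_nonneg _)) (by linarith [exp_pos (-t)])
    calc ‖u t‖ ≤ gronwallBound ‖u₀‖ (a * g₀) (b * g₀) (1 - exp (-t)) :=
          hu0 ▸ norm_le_gronwallBound_one_sub_exp_neg hderiv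
            (fun s hs => (hspeed s hs).trans_eq (by ring)) t ht
      _ = (‖u₀‖ + b / a) * exp (a * g₀ * (1 - exp (-t))) - b / a := gronwallBound_mul_mul ha.ne' ..
      _ ≤ (‖u₀‖ + b / a) * exp (a * g₀) - b / a := by gcongr
  refine ⟨hnorm, fun t ht => (hspeed t ht).trans ?_⟩
  gcongr
  exact hnorm t ht

/-- If `‖[F'(u)]⁻¹‖ ≤ a‖u‖ + b` (`a > 0`, `b > 0`) and `u` solves
the DSM equation on `[0,∞)` with `u(0) = u₀`, then with `g₀ = ‖F(u₀) - f‖`,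
`p = b/a`, `c₁ = (‖u₀‖ + p)e^{a g₀} - p`, one has `‖u(t)‖ ≤ c₁` and
`‖u̇(t)‖ ≤ (a c₁ + b) g₀ e^{-t}` for all `t ≥ 0`. -/
theorem dsm_trajectory_bound
    {H : Type*} [NormedAddCommGroup H] [InnerProductSpace ℝ H] [CompleteSpace H]
    (F : H → H) (F' : H → H →L[ℝ] H) (Finv : H → H →L[ℝ] H)
    (hF' : ∀ u, HasFDerivAt F (F' u) u)
    (hinv_left : ∀ u, (Finv u).comp (F' u) = ContinuousLinearMap.id ℝ H)
    (hinv_right : ∀ u, (F' u).comp (Finv u) = ContinuousLinearMap.id ℝ H)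
    (a b : ℝ) (ha : 0 < a) (hb : 0 < b)
    (hinv_bound : ∀ u : H, ‖Finv u‖ ≤ a * ‖u‖ + b)
    (f u₀ : H) (u u' : ℝ → H)
    (hu0 : u 0 = u₀)
    (hODE : ∀ t ∈ Ici (0:ℝ), u' t = -(Finv (u t) (F (u t) - f)))
    (hderiv : ∀ t ∈ Ici (0:ℝ), HasDerivWithinAt u (u' t) (Ici (0:ℝ)) t) :
    (∀ t ∈ Ici (0:ℝ),
      ‖u t‖ ≤ (‖u₀‖ + b / a) * Real.exp (a * ‖F u₀ - f‖) - b / a) ∧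
    (∀ t ∈ Ici (0:ℝ),
      ‖u' t‖ ≤ (a * ((‖u₀‖ + b / a) * Real.exp (a * ‖F u₀ - f‖) - b / a) + b) *
        ‖F u₀ - f‖ * Real.exp (-t)) :=
  dsm_trajectory_bound_general F F' Finv hF' hinv_right a b ha hb hinv_bound f u₀ u u' hu0 hODE
    hderiv
end

section
/- Let c > 0. There exist δ₀ > 0 and c₃ > 0 such that: if η : [0,∞) → [0,∞) is differentiable, satisfies the differential inequality η̇(t) ≤ −η(t) + c η(t)² + c e^{−t} η(t) for all t ≥ 0, and η(0) = δ with 0 ≤ δ ≤ δ₀, then η(t) ≤ c₃ δ e^{−t} for all t ≥ 0. -/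
/-!
The solution of the linear comparison equation `B' = B (-1 + (c + 1) e^{-t})`, `B 0 = δ'`, is
`B t = δ' exp (-t + (c + 1)(1 - e^{-t})) ≤ e^{c+1} δ' e^{-t}`. When `c δ' e^{c+1} < 1` this gives
`c B < e^{-t}`, so wherever `η` touches `B` the differential inequality forces `η' < B'`, and `B`
is a barrier for `η`. Letting `δ' ↓ δ` yields the bound with `c₃ = e^{c+1}`, also for `δ = 0`.
-/

open Real Set Filter Topology

noncomputable def decayBarrier (a δ t : ℝ) : ℝ :=
  δ * exp (-t + a * (1 - exp (-t)))

lemma decayBarrier_zero (a δ : ℝ) : decayBarrier a δ 0 = δ := by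
  simp [decayBarrier]

lemma decayBarrier_pos {a δ : ℝ} (hδ : 0 < δ) (t : ℝ) : 0 < decayBarrier a δ t := by
  unfold decayBarrier
  positivity

lemma hasDerivAt_decayBarrier (a δ t : ℝ) :
    HasDerivAt (decayBarrier a δ) (decayBarrier a δ t * (-1 + a * exp (-t))) t := by
  have hneg : HasDerivAt (fun x : ℝ => -x) (-1) t := (hasDerivAt_id' t).neg
  have hexponent : HasDerivAt (fun x : ℝ => -x + a * (1 - exp (-x)))
      (-1 + a * exp (-t)) t :=
    (hneg.add (((hasDerivAt_const t 1).sub hneg.exp).const_mul a)).congr_deriv (by ring)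
  exact (hexponent.exp.const_mul δ).congr_deriv (by unfold decayBarrier; ring)

lemma decayBarrier_le {a δ : ℝ} (ha : 0 ≤ a) (hδ : 0 ≤ δ) (t : ℝ) :
    decayBarrier a δ t ≤ exp a * δ * exp (-t) := by
  have hexponent : -t + a * (1 - exp (-t)) ≤ a + -t := by
    nlinarith [exp_pos (-t)]
  calc decayBarrier a δ t ≤ δ * exp (a + -t) := by
        unfold decayBarrier
        gcongr
    _ = exp a * δ * exp (-t) := by
        rw [exp_add]
        ring

lemma mul_decayBarrier_lt_exp {c δ : ℝ} (hc : 0 ≤ c) (hδ : 0 ≤ δ)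
    (hsmall : c * δ * exp (c + 1) < 1) (t : ℝ) :
    c * decayBarrier (c + 1) δ t < exp (-t) :=
  calc c * decayBarrier (c + 1) δ t ≤ c * (exp (c + 1) * δ * exp (-t)) := by
        gcongr
        exact decayBarrier_le (by linarith) hδ t
    _ = c * δ * exp (c + 1) * exp (-t) := by ring
    _ < 1 * exp (-t) := by gcongr
    _ = exp (-t) := one_mul _

theorem le_decayBarrier_of_deriv_le {c δ : ℝ} {η η' : ℝ → ℝ} (hc : 0 ≤ c) (hδ : 0 < δ)
    (hsmall : c * δ * exp (c + 1) < 1) (hη0 : η 0 ≤ δ)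
    (hderiv : ∀ t ∈ Ici (0:ℝ), HasDerivWithinAt η (η' t) (Ici (0:ℝ)) t)
    (hineq : ∀ t ∈ Ici (0:ℝ), η' t ≤ -η t + c * (η t) ^ 2 + c * exp (-t) * η t)
    {t : ℝ} (ht : 0 ≤ t) : η t ≤ decayBarrier (c + 1) δ t := by
  set B := decayBarrier (c + 1) δ
  have hcont : ContinuousOn η (Icc 0 t) := fun x hx =>
    (hderiv x hx.1).continuousWithinAt.mono fun _ hy => hy.1
  have hderiv_right : ∀ x ∈ Ico 0 t, HasDerivWithinAt η (η' x) (Ici x) x := fun x hx =>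
    (hderiv x hx.1).mono (Ici_subset_Ici.2 hx.1)
  have hstart : η 0 ≤ B 0 := hη0.trans_eq (decayBarrier_zero _ _).symm
  have htouch : ∀ x ∈ Ico 0 t, η x = B x → η' x < B x * (-1 + (c + 1) * exp (-x)) := by
    intro x hx hx_eq
    have hBx := mul_decayBarrier_lt_exp hc hδ.le hsmall x
    calc η' x ≤ B x * (-1 + c * B x + c * exp (-x)) := by
          have := hineq x hx.1
          rw [hx_eq] at this
          linarith
      _ < B x * (-1 + exp (-x) + c * exp (-x)) := by
          gcongr
          exact decayBarrier_pos hδ x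
      _ = B x * (-1 + (c + 1) * exp (-x)) := by ring
  exact image_le_of_deriv_right_lt_deriv_boundary hcont hderiv_right hstart
    (hasDerivAt_decayBarrier (c + 1) δ) htouch (right_mem_Icc.2 ht)

/-- For each `c > 0` there are `δ₀ > 0` and `c₃ > 0` such that any
nonnegative differentiable `η` on `[0,∞)` with
`η̇ ≤ -η + c η² + c e^{-t} η` and `η(0) = δ ≤ δ₀` satisfies
`η(t) ≤ c₃ δ e^{-t}` for all `t ≥ 0`. -/
theorem eta_decay_inequality (c : ℝ) (hc : 0 < c) :
    ∃ δ₀ > (0:ℝ), ∃ c₃ > (0:ℝ),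
      ∀ (η η' : ℝ → ℝ) (δ : ℝ), 0 ≤ δ → δ ≤ δ₀ → η 0 = δ →
        (∀ t ∈ Ici (0:ℝ), 0 ≤ η t) →
        (∀ t ∈ Ici (0:ℝ), HasDerivWithinAt η (η' t) (Ici (0:ℝ)) t) →
        (∀ t ∈ Ici (0:ℝ),
          η' t ≤ -η t + c * (η t) ^ 2 + c * Real.exp (-t) * η t) →
        ∀ t ∈ Ici (0:ℝ), η t ≤ c₃ * δ * Real.exp (-t) := by
  set δ₀ := 1 / (2 * c * exp (c + 1))
  have hδ₀ : 0 < δ₀ := by positivity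
  refine ⟨δ₀, hδ₀, exp (c + 1), exp_pos _, ?_⟩
  intro η η' δ hδ hδδ₀ hη0 _ hderiv hineq t ht
  have hbound : ∀ δ' ∈ Ioo δ (2 * δ₀), η t ≤ exp (c + 1) * δ' * exp (-t) := by
    intro δ' ⟨hδ'_gt, hδ'_lt⟩
    have hsmall : c * δ' * exp (c + 1) < 1 := by
      calc c * δ' * exp (c + 1) < c * (2 * δ₀) * exp (c + 1) := by gcongr
        _ = 1 := by simp only [δ₀]; field_simp
    exact (le_decayBarrier_of_deriv_le hc.le (hδ.trans_lt hδ'_gt) hsmall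
      (hη0.trans_lt hδ'_gt).le hderiv hineq ht).trans
      (decayBarrier_le (by linarith) (by linarith) t)
  have hlim : Tendsto (fun δ' => exp (c + 1) * δ' * exp (-t)) (𝓝[>] δ)
      (𝓝 (exp (c + 1) * δ * exp (-t))) :=
    ((continuous_const.mul continuous_id).mul continuous_const).continuousWithinAt
  exact ge_of_tendsto hlim (eventually_of_mem (Ioo_mem_nhdsGT (by linarith)) hbound)
end

section
/- Let c > 0. There exist δ₀ > 0 and c₃ > 0 such that: if h : [0,∞) → [0,∞) is differentiable, satisfies ḣ(t) ≤ c e^{−t}(h(t)² + h(t)) for all t ≥ 0, and h(0) = δ with 0 ≤ δ ≤ δ₀, then h(t) ≤ c₃ δ for all t ≥ 0. -/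
/-!
Separating variables in `ḣ ≤ c e^{-t} h (1 + h)` gives `d/dt log (h / (1 + h)) ≤ c e^{-t}`, so
`h / (1 + h) · exp (c e^{-t})` is nonincreasing (this form avoids the logarithm where `h`
vanishes).
Hence `h / (1 + h) ≤ e^c δ`, and once `e^c δ ≤ 1/2` this yields `h ≤ 2 e^c δ`.
-/

open Set Real

theorem hasDerivAt_exp_mul_exp_neg (c x : ℝ) :
    HasDerivAt (fun t => exp (c * exp (-t))) (-(c * exp (-x) * exp (c * exp (-x)))) x := by
  have := ((hasDerivAt_neg x).exp.const_mul c).exp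
  convert this using 1
  ring

theorem antitoneOn_div_one_add_mul_exp {D : Set ℝ} (hD : Convex ℝ D) {h h' : ℝ → ℝ}
    {c : ℝ} (h_gt : ∀ t ∈ D, -1 < h t) (hh : ∀ t ∈ D, HasDerivWithinAt h (h' t) D t)
    (h'_le : ∀ t ∈ D, h' t ≤ c * exp (-t) * (h t ^ 2 + h t)) :
    AntitoneOn (fun t => h t / (1 + h t) * exp (c * exp (-t))) D := by
  have hφ : ∀ t ∈ D, HasDerivWithinAt (fun t => h t / (1 + h t) * exp (c * exp (-t)))
      ((h' t * (1 + h t) - h t * h' t) / (1 + h t) ^ 2 * exp (c * exp (-t)) +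
        h t / (1 + h t) * -(c * exp (-t) * exp (c * exp (-t)))) D t := fun t ht =>
    ((hh t ht).div ((hh t ht).const_add 1) (by linarith [h_gt t ht])).mul
      (hasDerivAt_exp_mul_exp_neg c t).hasDerivWithinAt
  refine antitoneOn_of_hasDerivWithinAt_nonpos hD (fun t ht => (hφ t ht).continuousWithinAt)
    (fun t ht => (hφ t (interior_subset ht)).mono interior_subset) fun t ht => ?_
  have htD := interior_subset ht
  have h1 : 0 < 1 + h t := by linarith [h_gt t htD]
  have hφ'_factor : (h' t * (1 + h t) - h t * h' t) / (1 + h t) ^ 2 * exp (c * exp (-t)) +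
        h t / (1 + h t) * -(c * exp (-t) * exp (c * exp (-t))) =
      (h' t - c * exp (-t) * (h t ^ 2 + h t)) * (exp (c * exp (-t)) / (1 + h t) ^ 2) := by
    field_simp
    ring
  rw [hφ'_factor]
  exact mul_nonpos_of_nonpos_of_nonneg (by linarith [h'_le t htD]) (by positivity)

theorem le_two_mul_of_div_one_add_le {x y : ℝ} (hx : 0 ≤ x) (hxy : x / (1 + x) ≤ y)
    (hy : y ≤ 1 / 2) :
    x ≤ 2 * y := by
  rw [div_le_iff₀ (by linarith)] at hxy
  nlinarith

theorem div_one_add_le_exp_mul {h h' : ℝ → ℝ} {c : ℝ} (hc : 0 ≤ c)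
    (h_nonneg : ∀ t ∈ Ici (0 : ℝ), 0 ≤ h t)
    (hh : ∀ t ∈ Ici (0 : ℝ), HasDerivWithinAt h (h' t) (Ici 0) t)
    (h'_le : ∀ t ∈ Ici (0 : ℝ), h' t ≤ c * exp (-t) * (h t ^ 2 + h t))
    {t : ℝ} (ht : t ∈ Ici 0) :
    h t / (1 + h t) ≤ exp c * h 0 := by
  have h_gt : ∀ t ∈ Ici (0 : ℝ), -1 < h t := fun t ht => by linarith [h_nonneg t ht]
  have h₀ := h_nonneg 0 self_mem_Ici
  have ht₀ := h_nonneg t ht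
  calc h t / (1 + h t) ≤ h t / (1 + h t) * exp (c * exp (-t)) :=
        le_mul_of_one_le_right (by positivity) (one_le_exp (by positivity))
    _ ≤ h 0 / (1 + h 0) * exp (c * exp (-0)) :=
        antitoneOn_div_one_add_mul_exp (convex_Ici 0) h_gt hh h'_le self_mem_Ici ht ht
    _ ≤ exp c * h 0 := by
        rw [neg_zero, exp_zero, mul_one, mul_comm]
        exact mul_le_mul_of_nonneg_left (div_le_self h₀ (by linarith)) (exp_pos c).le

/-- For each `c > 0` there are `δ₀ > 0` and `c₃ > 0` such that any
nonnegative differentiable `h` on `[0,∞)` with `ḣ ≤ c e^{-t}(h² + h)` and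
`h(0) = δ ≤ δ₀` satisfies `h(t) ≤ c₃ δ` for all `t ≥ 0`. -/
theorem h_bound_inequality (c : ℝ) (hc : 0 < c) :
    ∃ δ₀ > (0:ℝ), ∃ c₃ > (0:ℝ),
      ∀ (h h' : ℝ → ℝ) (δ : ℝ), 0 ≤ δ → δ ≤ δ₀ → h 0 = δ →
        (∀ t ∈ Ici (0:ℝ), 0 ≤ h t) →
        (∀ t ∈ Ici (0:ℝ), HasDerivWithinAt h (h' t) (Ici (0:ℝ)) t) →
        (∀ t ∈ Ici (0:ℝ), h' t ≤ c * Real.exp (-t) * ((h t) ^ 2 + h t)) →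
        ∀ t ∈ Ici (0:ℝ), h t ≤ c₃ * δ := by
  refine ⟨exp (-c) / 2, by positivity, 2 * exp c, by positivity, ?_⟩
  intro h h' δ _ hδ₀ h0 h_nonneg hh h'_le t ht
  have hratio : h t / (1 + h t) ≤ exp c * δ :=
    h0 ▸ div_one_add_le_exp_mul hc.le h_nonneg hh h'_le ht
  have hsmall : exp c * δ ≤ 1 / 2 := by
    have := mul_le_mul_of_nonneg_left hδ₀ (exp_pos c).le
    rwa [mul_div_assoc', ← exp_add, add_neg_cancel, exp_zero] at this
  calc h t ≤ 2 * (exp c * δ) := le_two_mul_of_div_one_add_le (h_nonneg t ht) hratio hsmall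
    _ = 2 * exp c * δ := by ring
end
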